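/- arXiv:1706.09002 — 8 statements merged into one kernel-verified Lean document; each statement's English description precedes it below -/
import Mathlib

section
/- Let G be a connected P_k-free graph with k ≥ 4, and let X be a minimum connected dominating set of G (a connected dominating set of minimum cardinality). Then the induced subgraph G_X is P_{k-2}-free or isomorphic to the path P_{k-2}. -/
open SimpleGraph

/-- The join of two simple graphs on disjoint vertex sets. -/
def joinG {V1 V2 : Type} (G1 : SimpleGraph V1) (G2 : SimpleGraph V2) :
    SimpleGraph (V1 ⊕ V2) where
  Adj a b :=
    match a, b with
    | Sum.inl x, Sum.inl y => G1.Adj x y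
    | Sum.inr x, Sum.inr y => G2.Adj x y
    | Sum.inl _, Sum.inr _ => True
    | Sum.inr _, Sum.inl _ => True
  symm := by
    constructor
    intro a b h
    cases a <;> cases b <;> simp_all <;> exact h.symm
  loopless := by
    constructor
    intro a
    cases a <;> simp

/-- A graph `G` contains an induced copy of the path on `k` vertices iff there is a
graph embedding (= isomorphism onto an induced subgraph) of `pathGraph k` into `G`. -/
def HasInducedPathOn {V : Type} (G : SimpleGraph V) (k : ℕ) : Prop :=
  Nonempty (SimpleGraph.pathGraph k ↪g G)

/-- `G` is `P_k`-free. -/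
def PFree {V : Type} (G : SimpleGraph V) (k : ℕ) : Prop :=
  ¬ HasInducedPathOn G k

/-- Length (number of edges) of a longest induced path of `G`. -/
noncomputable def longestInducedPathLen {V : Type} (G : SimpleGraph V) : ℕ :=
  sSup {k : ℕ | HasInducedPathOn G (k + 1)}

/-- `X` is a dominating set of `G`. -/
def IsDomSet {V : Type} (G : SimpleGraph V) (X : Set V) : Prop :=
  ∀ v ∉ X, ∃ u ∈ X, G.Adj v u

/-- `X` is a connected dominating set of `G`. -/
def IsConnDomSet {V : Type} (G : SimpleGraph V) (X : Set V) : Prop :=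
  IsDomSet G X ∧ (G.induce X).Connected

/-- A minimum connected dominating set. -/
def IsMinimumConnDomSet {V : Type} (G : SimpleGraph V) (X : Set V) : Prop :=
  IsConnDomSet G X ∧ ∀ Y : Set V, IsConnDomSet G Y → X.ncard ≤ Y.ncard

/-- Weakly closed graph: it admits a labeling of its vertices such that whenever
`{a,b}` is an edge and `c` has a label strictly between those of `a` and `b`,
then `c` is adjacent to `a` or to `b`. -/
def WeaklyClosed {V : Type} [Fintype V] (G : SimpleGraph V) : Prop :=
  ∃ e : V ≃ Fin (Fintype.card V),
    ∀ a b c : V, G.Adj a b → e a < e c → e c < e b → (G.Adj a c ∨ G.Adj b c)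

/-- Number of connected components. -/
noncomputable def numComp {V : Type} (G : SimpleGraph V) : ℕ :=
  Nat.card G.ConnectedComponent

/-- The collection `C(G)` of sets with the cut point property, together with `∅`. -/
def cutSets {V : Type} (G : SimpleGraph V) : Set (Set V) :=
  {(∅ : Set V)} ∪
    {T : Set V | T ⊂ Set.univ ∧ ∀ i ∈ T,
      numComp (G.induce (Tᶜ ∪ {i})) < numComp (G.induce Tᶜ)}

/-- The collection `C(H)` for the induced subgraph `H` of `G` on a subset `W`,
viewed as a collection of subsets of the ambient vertex set. -/
def relCutSets {V : Type} (G : SimpleGraph V) (W : Set V) : Set (Set V) :=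
  {T : Set V | T ⊆ W ∧ (T = ∅ ∨ (T ≠ W ∧ ∀ i ∈ T,
    numComp (G.induce ((W \ T) ∪ {i})) < numComp (G.induce (W \ T))))}

/-- `G` is `ℓ`-connected. -/
def LConnected {V : Type} [Fintype V] (G : SimpleGraph V) (ℓ : ℕ) : Prop :=
  ℓ + 1 ≤ Fintype.card V ∧
    ∀ A : Set V, A.ncard < ℓ → (G.induce Aᶜ).Connected

/-- A maximal clique of `G`. -/
def IsMaxClique {V : Type} (G : SimpleGraph V) (s : Set V) : Prop :=
  G.IsClique s ∧ ∀ t : Set V, G.IsClique t → s ⊆ t → s = t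


/-!
An end `x₀` of an induced path of `G_X` on at least two vertices can always be extended: if `x₀`
is a cut vertex of `G_X`, by a neighbour of `x₀` in a component of `G_X - x₀` missing the rest of
the path; otherwise, by minimality, `X - x₀` fails to dominate and `x₀` has a private neighbour
outside `X`. Hence `G_X` has no induced `P_{k-1}`, and both ends of an induced path
`x₀ … x_{k-3}` of `G_X` are non-cut vertices. So `x₀` has a private neighbour `p`, and
`X - x_{k-3} + p` is again a minimum connected dominating set: a vertex dominated only by
`x_{k-3}` is adjacent to `p`, or else it closes an induced `P_k` with `p x₀ … x_{k-3}`. The slid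
path `p x₀ … x_{k-4}` leaves the rest `A = X \ {x₀, …, x_{k-3}}` unchanged and `p` has no
neighbour in `A`. After `k - 2` slides no vertex of the path sees `A`, which contradicts
connectivity unless `A` is empty.
-/

namespace SimpleGraph

namespace pathGraph

def revIso (n : ℕ) : pathGraph n ≃g pathGraph n where
  toEquiv := Fin.revPerm
  map_rel_iff' := by
    intro a b
    simp only [Fin.revPerm_apply, pathGraph_adj, Fin.val_rev]
    omega

def succEmb (n : ℕ) : pathGraph n ↪g pathGraph (n + 1) where
  toEmbedding := ⟨Fin.succ, Fin.succ_injective n⟩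
  map_rel_iff' := by simp [pathGraph_adj]

def castSuccEmb (n : ℕ) : pathGraph n ↪g pathGraph (n + 1) where
  toEmbedding := Fin.castSuccEmb
  map_rel_iff' := by simp [pathGraph_adj]

@[simp]
lemma castSuccEmb_apply {n : ℕ} (i : Fin n) : castSuccEmb n i = i.castSucc := rfl

end pathGraph

variable {V : Type} {G : SimpleGraph V}

namespace Embedding

def pathCons {n : ℕ} (f : pathGraph n ↪g G) (c : V) (hc : c ∉ Set.range f)
    (hadj : ∀ i, G.Adj c (f i) ↔ (i : ℕ) = 0) : pathGraph (n + 1) ↪g G where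
  toFun := Fin.cons c f
  inj' := by
    intro a b hab
    induction a using Fin.cases <;> induction b using Fin.cases <;>
      simp_all [eq_comm (a := c), f.injective.eq_iff]
  map_rel_iff' := by
    intro a b
    show G.Adj ((Fin.cons c f : Fin (n + 1) → V) a) ((Fin.cons c f : Fin (n + 1) → V) b) ↔ _
    induction a using Fin.cases <;> induction b using Fin.cases <;>
      simp [pathGraph_adj, hadj, G.adj_comm (f _) c]

lemma range_pathCons {n : ℕ} (f : pathGraph n ↪g G) {c : V} (hc : c ∉ Set.range f)
    (hadj : ∀ i, G.Adj c (f i) ↔ (i : ℕ) = 0) :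
    Set.range (f.pathCons c hc hadj) = insert c (Set.range f) :=
  Fin.range_cons c f

lemma adj_apply_iff {W : Type*} {H : SimpleGraph W} (f : H ↪g G) {X : Set V}
    (hf : Set.range f ⊆ X) {p : V} {w : W} (hp : ∀ t ∈ X, G.Adj p t ↔ t = f w) (u : W) :
    G.Adj p (f u) ↔ u = w :=
  (hp _ (hf ⟨u, rfl⟩)).trans f.injective.eq_iff

end Embedding

lemma hasInducedPathOn_of_extend_both_ends {n : ℕ} (f : pathGraph (n + 1) ↪g G) {p v : V}
    (hp : p ∉ Set.range f) (hv : v ∉ Set.range f) (hpv : p ≠ v) (hvp : ¬ G.Adj v p)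
    (hpadj : ∀ i, G.Adj p (f i) ↔ (i : ℕ) = 0) (hvadj : ∀ i, G.Adj v (f i) ↔ (i : ℕ) = n) :
    HasInducedPathOn G (n + 3) := by
  let g := (f.pathCons p hp hpadj).comp (pathGraph.revIso _).toEmbedding
  have hcons : ∀ j : Fin (n + 2), (Fin.cons p f : Fin (n + 2) → V) j ≠ v ∧
      (G.Adj v ((Fin.cons p f : Fin (n + 2) → V) j) ↔ (j : ℕ) = n + 1) :=
    Fin.cases ⟨hpv, by simp [hvp]⟩ fun i => ⟨fun h => hv ⟨i, by simpa using h⟩, by simp [hvadj]⟩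
  refine ⟨g.pathCons v (fun ⟨i, hi⟩ => (hcons _).1 hi) fun i => (hcons _).2.trans ?_⟩
  change (i.rev : ℕ) = n + 1 ↔ (i : ℕ) = 0
  rw [Fin.val_rev]
  omega

lemma exists_adj_reachable_induce_diff_singleton {T : Set V} (hT : (G.induce T).Connected)
    {x : V} (hx : x ∈ T) (y : ↥(T \ {x})) :
    ∃ c : ↥(T \ {x}), G.Adj x c ∧ (G.induce (T \ {x})).Reachable y c := by
  obtain ⟨p⟩ := hT.preconnected ⟨y, y.2.1⟩ ⟨x, hx⟩
  let S : Set T := {z | ∃ h : z.1 ∈ T \ {x}, (G.induce (T \ {x})).Reachable y ⟨z, h⟩}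
  obtain ⟨d, -, ⟨hd, hreach⟩, hout⟩ :=
    p.exists_boundary_dart S ⟨y.2, .rfl⟩ fun ⟨h, _⟩ => h.2 rfl
  have hsnd : d.snd.1 = x := by
    by_contra hne
    exact hout ⟨⟨d.snd.2, hne⟩, hreach.trans (Adj.reachable d.adj)⟩
  exact ⟨⟨d.fst, hd⟩, hsnd ▸ d.adj.symm, hreach⟩

lemma exists_pathCons_of_not_connected {T : Set V} (hT : (G.induce T).Connected) {n : ℕ}
    (f : pathGraph (n + 2) ↪g G) (hf : Set.range f ⊆ T)
    (hcut : ¬ (G.induce (T \ {f 0})).Connected) :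
    ∃ c ∈ T, c ∉ Set.range f ∧ ∀ i, G.Adj c (f i) ↔ (i : ℕ) = 0 := by
  set H := G.induce (T \ {f 0})
  let g : pathGraph (n + 1) →g H :=
    { toFun i := ⟨f i.succ, hf ⟨_, rfl⟩, fun h => i.succ_ne_zero (f.injective h)⟩
      map_rel' h := (f.comp (pathGraph.succEmb _)).map_rel_iff.2 h }
  have hg : ∀ i, H.Reachable (g 0) (g i) := fun i =>
    ((pathGraph_connected n).preconnected 0 i).map g
  obtain ⟨y, hy⟩ : ∃ y, ¬ H.Reachable (g 0) y := by
    by_contra! h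
    have : Nonempty ↥(T \ {f 0}) := ⟨g 0⟩
    exact hcut ⟨fun u v => (h u).symm.trans (h v)⟩
  obtain ⟨c, hxc, hyc⟩ := exists_adj_reachable_induce_diff_singleton hT (hf ⟨0, rfl⟩) y
  have hfar : ∀ i, ¬ H.Reachable (g i) c := fun i h => hy ((hg i).trans (h.trans hyc.symm))
  refine ⟨c, c.2.1, ?_, fun i => ?_⟩
  · rintro ⟨i, hi⟩
    induction i using Fin.cases with
    | zero => exact c.2.2 hi.symm
    | succ j => exact hfar j ((Subtype.ext hi : g j = c) ▸ .rfl)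
  · induction i using Fin.cases with
    | zero => simp [hxc.symm]
    | succ j =>
      simp only [Fin.val_succ, Nat.add_one_ne_zero, iff_false]
      exact fun h => hfar j (Adj.reachable (show H.Adj (g j) c from h.symm))

end SimpleGraph

lemma IsDomSet.insert_diff_last {V : Type} {G : SimpleGraph V} {X : Set V} {n : ℕ}
    (hfree : PFree G (n + 4)) (hdom : IsDomSet G X) (f : pathGraph (n + 2) ↪g G)
    (hf : Set.range f ⊆ X) {p : V} (hpX : p ∉ X) (hp : ∀ t ∈ X, G.Adj p t ↔ t = f 0) :
    IsDomSet G (insert p (X \ {f (Fin.last _)})) := by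
  intro v hv
  simp only [Set.mem_insert_iff, Set.mem_sdiff, Set.mem_singleton_iff, not_or, not_and,
    not_not] at hv
  by_cases hvl : v = f (Fin.last _)
  · refine ⟨f (Fin.last n).castSucc, .inr ⟨hf ⟨_, rfl⟩, ?_⟩, ?_⟩
    · simp [f.injective.eq_iff, Fin.ext_iff]
    · rw [hvl]
      exact f.map_rel_iff.2 (by simp [pathGraph_adj])
  by_contra! hno
  have hvX : v ∉ X := fun h => hvl (hv.2 h)
  have hvadj : ∀ t ∈ X, G.Adj v t ↔ t = f (Fin.last _) := by
    intro t ht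
    refine ⟨fun h => by_contra fun hne => hno t (.inr ⟨ht, hne⟩) h, ?_⟩
    rintro rfl
    obtain ⟨u, hu, hvu⟩ := hdom v hvX
    obtain rfl : u = f (Fin.last _) := by_contra fun hne => hno u (.inr ⟨hu, hne⟩) hvu
    exact hvu
  exact hfree (hasInducedPathOn_of_extend_both_ends f (fun h => hpX (hf h))
    (fun h => hvX (hf h)) (fun h => hv.1 h.symm) (hno p (.inl rfl))
    (fun i => (f.adj_apply_iff hf hp i).trans Fin.ext_iff)
    (fun i => (f.adj_apply_iff hf hvadj i).trans Fin.ext_iff))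

namespace IsMinimumConnDomSet

variable {V : Type} {G : SimpleGraph V} {X : Set V}

lemma of_ncard_eq (hX : IsMinimumConnDomSet G X) {Y : Set V} (hY : IsConnDomSet G Y)
    (h : Y.ncard = X.ncard) : IsMinimumConnDomSet G Y :=
  ⟨hY, fun Z hZ => h ▸ hX.2 Z hZ⟩

variable [Finite V]

lemma not_isConnDomSet_diff_singleton (hX : IsMinimumConnDomSet G X) {x : V} (hx : x ∈ X) :
    ¬ IsConnDomSet G (X \ {x}) := fun h =>
  (Set.ncard_sdiff_singleton_lt_of_mem hx).not_ge (hX.2 _ h)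

lemma exists_private_neighbor (hX : IsMinimumConnDomSet G X) {x y : V} (hx : x ∈ X)
    (hy : y ∈ X) (hxy : G.Adj x y) (hconn : (G.induce (X \ {x})).Connected) :
    ∃ p ∉ X, ∀ t ∈ X, G.Adj p t ↔ t = x := by
  obtain ⟨p, hp, hno⟩ : ∃ p ∉ X \ {x}, ∀ u ∈ X \ {x}, ¬ G.Adj p u := by
    simpa [IsDomSet] using fun h => hX.not_isConnDomSet_diff_singleton hx ⟨h, hconn⟩
  have hpx : p ≠ x := by
    rintro rfl
    exact hno y ⟨hy, hxy.ne.symm⟩ hxy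
  have hpX : p ∉ X := fun h => hp ⟨h, hpx⟩
  have hno' : ∀ t ∈ X, G.Adj p t → t = x := fun t ht h => by_contra fun hne => hno t ⟨ht, hne⟩ h
  obtain ⟨u, hu, hpu⟩ := hX.1.1 p hpX
  exact ⟨p, hpX, fun t ht => ⟨hno' t ht, by rintro rfl; exact hno' u hu hpu ▸ hpu⟩⟩

lemma exists_pathCons (hX : IsMinimumConnDomSet G X) {n : ℕ} (f : pathGraph (n + 2) ↪g G)
    (hf : Set.range f ⊆ X) : ∃ c ∉ Set.range f, ∀ i, G.Adj c (f i) ↔ (i : ℕ) = 0 := by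
  by_cases hconn : (G.induce (X \ {f 0})).Connected
  · have h01 : G.Adj (f 0) (f 1) := f.map_rel_iff.2 (by simp [pathGraph_adj])
    obtain ⟨p, hpX, hp⟩ := hX.exists_private_neighbor (hf ⟨0, rfl⟩) (hf ⟨1, rfl⟩) h01 hconn
    exact ⟨p, fun h => hpX (hf h), fun i => (f.adj_apply_iff hf hp i).trans Fin.ext_iff⟩
  · obtain ⟨c, -, hc⟩ := exists_pathCons_of_not_connected hX.1.2 f hf hconn
    exact ⟨c, hc⟩

lemma not_range_subset (hX : IsMinimumConnDomSet G X) {n : ℕ} (hfree : PFree G (n + 3))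
    (f : pathGraph (n + 2) ↪g G) : ¬ Set.range f ⊆ X := fun hf => by
  obtain ⟨c, hc, hadj⟩ := hX.exists_pathCons f hf
  exact hfree ⟨f.pathCons c hc hadj⟩

lemma connected_induce_diff_head (hX : IsMinimumConnDomSet G X) {n : ℕ}
    (hfree : PFree G (n + 4)) (f : pathGraph (n + 2) ↪g G) (hf : Set.range f ⊆ X) :
    (G.induce (X \ {f 0})).Connected := by
  by_contra hcut
  obtain ⟨c, hcX, hc, hadj⟩ := exists_pathCons_of_not_connected hX.1.2 f hf hcut
  refine hX.not_range_subset hfree (f.pathCons c hc hadj) ?_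
  rw [Embedding.range_pathCons]
  exact Set.insert_subset hcX hf

lemma exists_slide (hX : IsMinimumConnDomSet G X) {n : ℕ} (hfree : PFree G (n + 4))
    (f : pathGraph (n + 2) ↪g G) (hf : Set.range f ⊆ X) :
    ∃ p ∉ X, (∀ t ∈ X, G.Adj p t ↔ t = f 0) ∧
      IsMinimumConnDomSet G (insert p (X \ {f (Fin.last _)})) := by
  have hf0 : f 0 ∈ X := hf ⟨0, rfl⟩
  have h01 : G.Adj (f 0) (f 1) := f.map_rel_iff.2 (by simp [pathGraph_adj])
  obtain ⟨p, hpX, hp⟩ :=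
    hX.exists_private_neighbor hf0 (hf ⟨1, rfl⟩) h01 (hX.connected_induce_diff_head hfree f hf)
  have hlast : (G.induce (X \ {f (Fin.last _)})).Connected :=
    hX.connected_induce_diff_head hfree (f.comp (pathGraph.revIso _).toEmbedding)
      fun _ ⟨i, hi⟩ => hf ⟨_, hi⟩
  refine ⟨p, hpX, hp, hX.of_ncard_eq ⟨hX.1.1.insert_diff_last hfree f hf hpX hp, ?_⟩ ?_⟩
  · rw [Set.insert_eq, Set.union_comm]
    refine connected_induce_union hlast.preconnected .of_subsingleton
      ⟨hf0, ?_⟩ rfl ((hp _ hf0).2 rfl).symm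
    simp [f.injective.eq_iff, Fin.ext_iff]
  · rw [Set.ncard_insert_of_notMem fun h => hpX h.1,
      Set.ncard_sdiff_singleton_add_one (hf ⟨_, rfl⟩)]

lemma exists_clean_prefix (hX : IsMinimumConnDomSet G X) {n : ℕ} (hfree : PFree G (n + 4))
    (f : pathGraph (n + 2) ↪g G) (hf : Set.range f ⊆ X) (r : ℕ) :
    ∃ Y, ∃ g : pathGraph (n + 2) ↪g G, IsMinimumConnDomSet G Y ∧ Set.range g ⊆ Y ∧
      Y \ Set.range g = X \ Set.range f ∧
      ∀ i : Fin (n + 2), (i : ℕ) < r → ∀ a ∈ X \ Set.range f, ¬ G.Adj (g i) a := by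
  induction r with
  | zero => exact ⟨X, f, hX, hf, rfl, by simp⟩
  | succ r ih =>
    obtain ⟨Y, g, hY, hg, hA, hclean⟩ := ih
    obtain ⟨p, hpY, hp, hY'⟩ := hY.exists_slide hfree g hg
    let g' := g.comp (pathGraph.castSuccEmb _)
    have hpg : p ∉ Set.range g' := fun ⟨i, hi⟩ => hpY (hi ▸ hg ⟨_, rfl⟩)
    have hpadj : ∀ i, G.Adj p (g' i) ↔ (i : ℕ) = 0 := fun i =>
      (g.adj_apply_iff hg hp i.castSucc).trans (Fin.castSucc_eq_zero_iff.trans Fin.ext_iff)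
    refine ⟨_, g'.pathCons p hpg hpadj, hY', ?_, ?_, fun i hi a ha => ?_⟩
    · rw [Embedding.range_pathCons]
      refine Set.insert_subset_insert (Set.range_subset_iff.2 fun i => ⟨hg ⟨_, rfl⟩, ?_⟩)
      simp [g', g.injective.eq_iff, Fin.ext_iff]
      omega
    · rw [Embedding.range_pathCons, ← hA]
      ext z
      have : z ∈ Y → z ≠ p := fun hz h => hpY (h ▸ hz)
      simp [g', Fin.exists_fin_succ' (P := fun i => g i = z)]
      tauto
    · induction i using Fin.cases with
      | zero =>
        have haY : a ∈ Y \ Set.range g := hA ▸ ha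
        exact fun h => haY.2 ⟨0, ((hp a haY.1).1 h).symm⟩
      | succ j => exact hclean j.castSucc (by simpa using hi) a ha

lemma range_eq (hX : IsMinimumConnDomSet G X) {n : ℕ} (hfree : PFree G (n + 4))
    (f : pathGraph (n + 2) ↪g G) (hf : Set.range f ⊆ X) : Set.range f = X := by
  refine hf.antisymm fun a haX => by_contra fun haf => ?_
  obtain ⟨Y, g, hY, hg, hA, hclean⟩ := hX.exists_clean_prefix hfree f hf (n + 2)
  have haY : a ∈ Y \ Set.range g := hA ▸ ⟨haX, haf⟩
  obtain ⟨w⟩ := hY.1.2.preconnected ⟨a, haY.1⟩ ⟨g 0, hg ⟨0, rfl⟩⟩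
  obtain ⟨d, -, hd, hd'⟩ :=
    w.exists_boundary_dart {z | z.1 ∉ Set.range g} haY.2 (by simp)
  obtain ⟨i, hi⟩ := not_not.1 hd'
  exact hclean i i.2 d.fst (hA ▸ ⟨d.fst.2, hd⟩) (hi ▸ d.adj.symm)

end IsMinimumConnDomSet

theorem stmt0_general {V : Type} [Fintype V] (G : SimpleGraph V) (k : ℕ) (hk : 4 ≤ k)
    (hfree : PFree G k) (X : Set V)
    (hX : IsMinimumConnDomSet G X) :
    PFree (G.induce X) (k - 2) ∨
      Nonempty ((G.induce X) ≃g SimpleGraph.pathGraph (k - 2)) := by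
  obtain ⟨n, rfl⟩ : ∃ n, k = n + 4 := ⟨k - 4, by omega⟩
  refine or_iff_not_imp_left.2 fun hpath => ?_
  obtain ⟨e⟩ := not_not.1 hpath
  let f := (Embedding.induce X).comp e
  have hrange : Set.range f = X := hX.range_eq hfree f (Set.range_subset_iff.2 fun i => (e i).2)
  refine ⟨(RelIso.ofSurjective e fun x => ?_).symm⟩
  obtain ⟨i, hi⟩ : (x : V) ∈ Set.range f := by rw [hrange]; exact x.2
  exact ⟨i, Subtype.ext hi⟩

theorem stmt0 {V : Type} [Fintype V] (G : SimpleGraph V) (k : ℕ) (hk : 4 ≤ k)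
    (hconn : G.Connected) (hfree : PFree G k) (X : Set V)
    (hX : IsMinimumConnDomSet G X) :
    PFree (G.induce X) (k - 2) ∨
      Nonempty ((G.induce X) ≃g SimpleGraph.pathGraph (k - 2)) :=
  stmt0_general G k hk hfree X hX
end

section
/- Let G1 and G2 be weakly closed graphs on disjoint vertex sets. Then the join G1 * G2 is a connected weakly closed graph. -/
open SimpleGraph

def IsWeaklyClosedLabeling {V α : Type} [LT α] (G : SimpleGraph V) (f : V → α) : Prop :=
  ∀ a b c : V, G.Adj a b → f a < f c → f c < f b → G.Adj a c ∨ G.Adj b c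

theorem weaklyClosed_of_isWeaklyClosedLabeling {V α : Type} [Fintype V] [LinearOrder α]
    {G : SimpleGraph V} {f : V → α} (hf : Function.Injective f)
    (hG : IsWeaklyClosedLabeling G f) : WeaklyClosed G := by
  let _ : LinearOrder V := LinearOrder.lift' f hf
  have hlt : ∀ {a b : V}, a < b ↔ f a < f b := Iff.rfl
  let e := (Fintype.orderIsoFinOfCardEq V rfl).symm
  exact ⟨e.toEquiv, fun a b c hab hac hcb =>
    hG a b c hab (hlt.mp (e.lt_iff_lt.mp hac)) (hlt.mp (e.lt_iff_lt.mp hcb))⟩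

theorem joinG_adj_inl_inr {V1 V2 : Type} (G1 : SimpleGraph V1) (G2 : SimpleGraph V2)
    (x : V1) (y : V2) : (joinG G1 G2).Adj (Sum.inl x) (Sum.inr y) :=
  trivial

theorem joinG_adj_inr_inl {V1 V2 : Type} (G1 : SimpleGraph V1) (G2 : SimpleGraph V2)
    (y : V2) (x : V1) : (joinG G1 G2).Adj (Sum.inr y) (Sum.inl x) :=
  trivial

theorem joinG_connected {V1 V2 : Type} [Nonempty V1] [Nonempty V2]
    (G1 : SimpleGraph V1) (G2 : SimpleGraph V2) : (joinG G1 G2).Connected := by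
  obtain ⟨x₀⟩ := ‹Nonempty V1›
  obtain ⟨y₀⟩ := ‹Nonempty V2›
  have hreach : ∀ v, (joinG G1 G2).Reachable v (Sum.inl x₀)
    | .inl x => (joinG_adj_inl_inr G1 G2 x y₀).reachable.trans
        (joinG_adj_inr_inl G1 G2 y₀ x₀).reachable
    | .inr y => (joinG_adj_inr_inl G1 G2 y x₀).reachable
  exact (connected_iff_exists_forall_reachable _).mpr ⟨Sum.inl x₀, fun v => (hreach v).symm⟩

/-- Labeling `G1` before `G2`: a vertex strictly between the ends of an edge lies either on
the same side as both ends, or on the other side from one of them and hence adjacent to it. -/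
theorem IsWeaklyClosedLabeling.joinG {V1 V2 α β : Type} [LT α] [LT β]
    {G1 : SimpleGraph V1} {G2 : SimpleGraph V2} {f1 : V1 → α} {f2 : V2 → β}
    (h1 : IsWeaklyClosedLabeling G1 f1) (h2 : IsWeaklyClosedLabeling G2 f2) :
    IsWeaklyClosedLabeling (joinG G1 G2) (fun v => toLex (Sum.map f1 f2 v)) := by
  rintro (a | a) (b | b) (c | c) hab hac hcb <;>
    simp only [Sum.map_inl, Sum.map_inr, Sum.Lex.inl_lt_inl_iff, Sum.Lex.inr_lt_inr_iff]
      at hac hcb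
  · exact h1 a b c hab hac hcb
  · exact absurd hcb Sum.Lex.not_inr_lt_inl
  · exact .inr (joinG_adj_inr_inl G1 G2 b c)
  · exact .inl (joinG_adj_inl_inr G1 G2 a c)
  · exact absurd hac Sum.Lex.not_inr_lt_inl
  · exact absurd hcb Sum.Lex.not_inr_lt_inl
  · exact absurd hac Sum.Lex.not_inr_lt_inl
  · exact h2 a b c hab hac hcb

theorem stmt4 {V1 V2 : Type} [Fintype V1] [Fintype V2] [Nonempty V1] [Nonempty V2]
    (G1 : SimpleGraph V1) (G2 : SimpleGraph V2)
    (h1 : WeaklyClosed G1) (h2 : WeaklyClosed G2) :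
    (joinG G1 G2).Connected ∧ WeaklyClosed (joinG G1 G2) := by
  obtain ⟨e1, he1⟩ := h1
  obtain ⟨e2, he2⟩ := h2
  have hinj : Function.Injective fun v => toLex (Sum.map e1 e2 v) :=
    toLex.injective.comp (e1.injective.sumMap e2.injective)
  exact ⟨joinG_connected G1 G2,
    weaklyClosed_of_isWeaklyClosedLabeling hinj (IsWeaklyClosedLabeling.joinG he1 he2)⟩
end

section
/- Let G be a connected P_4-free graph on vertex set V with at least 2 vertices, which is not of the form K_1 * H for any graph H (i.e., G has no vertex adjacent to all others). Suppose {u,w} is an edge such that {u,w} is a dominating set of G. Set U = N(u) \ N[w], W = N(w) \ N[u], Z = N(u) ∩ N(w), and assume U and W are both nonempty. Then every vertex of U is adjacent to every vertex of W, and every vertex of Z is adjacent either to all vertices of U or to all vertices of W. -/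
open SimpleGraph

/-! In a `P₄`-free graph every path `a - b - c - d` with `a ≁ c` and `b ≁ d` closes up into
`a ~ d`. Applied to `a - u - w - b` for `a ∈ U`, `b ∈ W` this gives `a ~ b`; applied to
`z - u - a - b` for `z ∈ Z` it shows that `z` cannot miss both some `a ∈ U` and some `b ∈ W`. -/

theorem hasInducedPathOn_four {V : Type} {G : SimpleGraph V} {a b c d : V}
    (hab : G.Adj a b) (hbc : G.Adj b c) (hcd : G.Adj c d)
    (hac : ¬G.Adj a c) (had : ¬G.Adj a d) (hbd : ¬G.Adj b d) :
    HasInducedPathOn G 4 := by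
  set f : Fin 4 → V := ![a, b, c, d]
  have hadj : ∀ i j, G.Adj (f i) (f j) ↔ (pathGraph 4).Adj i j := by
    intro i j
    fin_cases i <;> fin_cases j <;>
      simp [f, pathGraph_adj, hab, hbc, hcd, hac, had, hbd, hab.symm, hbc.symm, hcd.symm,
        G.adj_comm _ a, G.adj_comm _ b]
  -- The vertices of `P₄` have pairwise distinct neighbourhoods, so `f` is injective.
  have hnbhd : ∀ i j : Fin 4, (∀ k, (pathGraph 4).Adj i k ↔ (pathGraph 4).Adj j k) → i = j := by
    simp only [pathGraph_adj]
    decide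
  refine ⟨⟨⟨f, fun i j hij => hnbhd i j fun k => ?_⟩, hadj _ _⟩⟩
  rw [← hadj, ← hadj, hij]

theorem PFree.adj_of_adj_adj_adj {V : Type} {G : SimpleGraph V} (hfree : PFree G 4)
    {a b c d : V} (hab : G.Adj a b) (hbc : G.Adj b c) (hcd : G.Adj c d)
    (hac : ¬G.Adj a c) (hbd : ¬G.Adj b d) : G.Adj a d := by
  by_contra had
  exact hfree (hasInducedPathOn_four hab hbc hcd hac had hbd)

theorem stmt5_general {V : Type} (G : SimpleGraph V)
    (hfree : PFree G 4)
    (u w : V) (huw : G.Adj u w)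
    (U W Z : Set V)
    (hU : U = G.neighborSet u \ (insert w (G.neighborSet w)))
    (hW : W = G.neighborSet w \ (insert u (G.neighborSet u)))
    (hZ : Z = G.neighborSet u ∩ G.neighborSet w) :
    (∀ a ∈ U, ∀ b ∈ W, G.Adj a b) ∧
      (∀ z ∈ Z, (∀ a ∈ U, G.Adj z a) ∨ (∀ b ∈ W, G.Adj z b)) := by
  subst hU hW hZ
  simp only [Set.mem_sdiff, Set.mem_insert_iff, Set.mem_inter_iff, mem_neighborSet, not_or]
  have hUW : ∀ a, G.Adj u a ∧ ¬a = w ∧ ¬G.Adj w a →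
      ∀ b, G.Adj w b ∧ ¬b = u ∧ ¬G.Adj u b → G.Adj a b :=
    fun a ⟨hua, _, hwa⟩ b ⟨hwb, _, hub⟩ =>
      hfree.adj_of_adj_adj_adj hua.symm huw hwb (fun h => hwa h.symm) hub
  refine ⟨hUW, fun z ⟨huz, _⟩ => ?_⟩
  by_contra! hmiss
  obtain ⟨⟨a, ha, hza⟩, b, hb, hzb⟩ := hmiss
  exact hzb (hfree.adj_of_adj_adj_adj huz.symm ha.1 (hUW a ha b hb) hza hb.2.2)

theorem stmt5 {V : Type} [Fintype V] (G : SimpleGraph V)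
    (hconn : G.Connected) (hfree : PFree G 4) (hcard : 2 ≤ Fintype.card V)
    (hnotcone : ¬ ∃ v : V, ∀ w : V, w ≠ v → G.Adj v w)
    (u w : V) (huw : G.Adj u w)
    (hdom : IsDomSet G ({u, w} : Set V))
    (U W Z : Set V)
    (hU : U = G.neighborSet u \ (insert w (G.neighborSet w)))
    (hW : W = G.neighborSet w \ (insert u (G.neighborSet u)))
    (hZ : Z = G.neighborSet u ∩ G.neighborSet w)
    (hUne : U.Nonempty) (hWne : W.Nonempty) :
    (∀ a ∈ U, ∀ b ∈ W, G.Adj a b) ∧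
      (∀ z ∈ Z, (∀ a ∈ U, G.Adj z a) ∨ (∀ b ∈ W, G.Adj z b)) :=
  stmt5_general G hfree u w huw U W Z hU hW hZ
end

section
/- Let G be a connected P_4-free graph with at least 2 vertices. Then G can be written as the join G = G1 * G2 of two graphs G1, G2 on disjoint nonempty vertex sets, i.e., the vertex set of G partitions into two nonempty parts such that every vertex of one part is adjacent to every vertex of the other part. -/
open SimpleGraph

/-!
Every `P₄`-free graph on at least two vertices is the disjoint union or the join of two nonempty
parts (Seinsche), and a connected graph is not a disjoint union. The dichotomy is proved by adding
one vertex `v` at a time; as `P₄` is self-complementary, it suffices to extend a join `A * B`.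
If `v` is adjacent to all of `A` (or all of `B`), the join extends. Otherwise `v` has non-neighbours
`a₀ ∈ A` and `b₀ ∈ B`, and every neighbour `x` of `v` is adjacent to every non-neighbour `z`, since
otherwise `v x b₀ z` or `v x a₀ z` is an induced `P₄`; so either `v` is isolated or its
neighbourhood splits off as one side of a join.
-/

namespace SimpleGraph

open Set

variable {V : Type} {G : SimpleGraph V}

def pathGraphFourEmbeddingCompl : pathGraph 4 ↪g (pathGraph 4)ᶜ where
  toFun := ![1, 3, 0, 2]
  inj' := by decide
  map_rel_iff' := by
    intro i j
    show (pathGraph 4)ᶜ.Adj (![1, 3, 0, 2] i) (![1, 3, 0, 2] j) ↔ _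
    rw [compl_adj, pathGraph_adj, pathGraph_adj]
    revert i j
    decide

lemma hasInducedPathOn_four {a b c d : V} (hab : G.Adj a b) (hbc : G.Adj b c) (hcd : G.Adj c d)
    (hac : ¬ G.Adj a c) (had : ¬ G.Adj a d) (hbd : ¬ G.Adj b d) :
    HasInducedPathOn G 4 := by
  have hca : ¬ G.Adj c a := fun h => hac h.symm
  have hda : ¬ G.Adj d a := fun h => had h.symm
  have hdb : ¬ G.Adj d b := fun h => hbd h.symm
  have hac' : a ≠ c := by rintro rfl; exact had hcd
  have hbd' : b ≠ d := by rintro rfl; exact had hab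
  have had' : a ≠ d := by rintro rfl; exact hac hcd.symm
  refine ⟨⟨⟨![a, b, c, d], ?_⟩, ?_⟩⟩
  · intro i j hij
    fin_cases i <;> fin_cases j <;> simp_all [hab.ne, hbc.ne, hcd.ne, eq_comm]
  · intro i j
    show G.Adj (![a, b, c, d] i) (![a, b, c, d] j) ↔ _
    fin_cases i <;> fin_cases j <;>
      simp [pathGraph_adj, hab, hbc, hcd, hab.symm, hbc.symm, hcd.symm, hac, had, hbd, hca, hda, hdb]

lemma PFree.compl (h : PFree G 4) : PFree Gᶜ 4 := by
  rintro ⟨f⟩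
  apply h
  rw [← compl_compl G]
  exact ⟨(Embedding.complEquiv f).comp pathGraphFourEmbeddingCompl⟩

lemma PFree.adj_of_adj_of_adj_of_adj (h : PFree G 4) {v x b z : V} (hvx : G.Adj v x)
    (hxb : G.Adj x b) (hbz : G.Adj b z) (hvb : ¬ G.Adj v b) (hvz : ¬ G.Adj v z) : G.Adj x z := by
  by_contra hxz
  exact h (hasInducedPathOn_four hvx hxb hbz hvb hvz hxz)

def IsDisjointUnionOn (G : SimpleGraph V) (S : Set V) : Prop :=
  ∃ A ⊆ S, A.Nonempty ∧ (S \ A).Nonempty ∧ ∀ a ∈ A, ∀ b ∈ S \ A, ¬ G.Adj a b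

def IsJoinOn (G : SimpleGraph V) (S : Set V) : Prop :=
  ∃ A ⊆ S, A.Nonempty ∧ (S \ A).Nonempty ∧ ∀ a ∈ A, ∀ b ∈ S \ A, G.Adj a b

lemma isJoinOn_compl_iff {S : Set V} : IsJoinOn Gᶜ S ↔ IsDisjointUnionOn G S := by
  refine exists_congr fun A => and_congr_right fun _ => and_congr_right fun _ =>
    and_congr_right fun _ => forall₂_congr fun a ha => forall₂_congr fun b hb => ?_
  rw [compl_adj]
  exact and_iff_right (ne_of_mem_of_not_mem ha hb.2)

lemma isDisjointUnionOn_compl_iff {S : Set V} : IsDisjointUnionOn Gᶜ S ↔ IsJoinOn G S := by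
  rw [← isJoinOn_compl_iff, compl_compl]

lemma isDisjointUnionOn_or_isJoinOn_pair {v w : V} (hvw : v ≠ w) :
    IsDisjointUnionOn G {v, w} ∨ IsJoinOn G {v, w} := by
  have hsplit (P : V → V → Prop) (hP : P v w) : ∃ A ⊆ ({v, w} : Set V), A.Nonempty ∧
      ({v, w} \ A).Nonempty ∧ ∀ a ∈ A, ∀ b ∈ ({v, w} : Set V) \ A, P a b := by
    refine ⟨{v}, by simp, singleton_nonempty v, ?_, ?_⟩ <;> rw [pair_sdiff_left hvw]
    · exact singleton_nonempty w
    · rintro _ rfl _ rfl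
      exact hP
  by_cases hadj : G.Adj v w
  · exact Or.inr (hsplit _ hadj)
  · exact Or.inl (hsplit (fun a b => ¬ G.Adj a b) hadj)

lemma isJoinOn_insert_of_forall_adj {T A : Set V} {v : V} (hAT : A ⊆ T) (hA : A.Nonempty)
    (hAB : ∀ a ∈ A, ∀ b ∈ T \ A, G.Adj a b) (hvA : ∀ a ∈ A, G.Adj v a) :
    IsJoinOn G (insert v T) := by
  refine ⟨A, hAT.trans (subset_insert v T), hA,
    ⟨v, mem_insert v T, fun hv => G.loopless.irrefl v (hvA v hv)⟩, ?_⟩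
  rintro a ha b ⟨rfl | hbT, hbA⟩
  · exact (hvA a ha).symm
  · exact hAB a ha b ⟨hbT, hbA⟩

lemma PFree.isDisjointUnionOn_or_isJoinOn_insert_of_isJoinOn (h : PFree G 4) {T : Set V} {v : V}
    (hv : v ∉ T) (hT : IsJoinOn G T) :
    IsDisjointUnionOn G (insert v T) ∨ IsJoinOn G (insert v T) := by
  obtain ⟨A, hAT, hA, hB, hAB⟩ := hT
  by_cases hvA : ∀ a ∈ A, G.Adj v a
  · exact Or.inr (isJoinOn_insert_of_forall_adj hAT hA hAB hvA)
  by_cases hvB : ∀ b ∈ T \ A, G.Adj v b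
  · refine Or.inr (isJoinOn_insert_of_forall_adj sdiff_subset hB ?_ hvB)
    rw [sdiff_sdiff_cancel_left hAT]
    exact fun b hb a ha => (hAB a ha b hb).symm
  push Not at hvA hvB
  obtain ⟨a₀, ha₀, hva₀⟩ := hvA
  obtain ⟨b₀, hb₀, hvb₀⟩ := hvB
  have hchord : ∀ x ∈ T, G.Adj v x → ∀ z ∈ T, ¬ G.Adj v z → G.Adj x z := by
    intro x hx hvx z hz hvz
    by_cases hxA : x ∈ A <;> by_cases hzA : z ∈ A
    · exact h.adj_of_adj_of_adj_of_adj hvx (hAB x hxA b₀ hb₀) (hAB z hzA b₀ hb₀).symm hvb₀ hvz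
    · exact hAB x hxA z ⟨hz, hzA⟩
    · exact (hAB z hzA x ⟨hx, hxA⟩).symm
    · exact h.adj_of_adj_of_adj_of_adj hvx (hAB a₀ ha₀ x ⟨hx, hxA⟩).symm
        (hAB a₀ ha₀ z ⟨hz, hzA⟩) hva₀ hvz
  by_cases hN : ∃ x ∈ T, G.Adj v x
  · obtain ⟨x₀, hx₀, hvx₀⟩ := hN
    refine Or.inr ⟨{x ∈ T | G.Adj v x}, fun x hx => mem_insert_of_mem v hx.1, ⟨x₀, hx₀, hvx₀⟩,
      ⟨v, mem_insert v T, fun hv' => G.loopless.irrefl v hv'.2⟩, ?_⟩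
    rintro x ⟨hx, hvx⟩ z ⟨rfl | hz, hzN⟩
    · exact hvx.symm
    · exact hchord x hx hvx z hz fun hvz => hzN ⟨hz, hvz⟩
  · push Not at hN
    refine Or.inl ⟨{v}, singleton_subset_iff.2 (mem_insert v T), singleton_nonempty v,
      ⟨a₀, mem_insert_of_mem v (hAT ha₀), fun ha₀v => hv (ha₀v ▸ hAT ha₀)⟩, ?_⟩
    rintro _ rfl b ⟨rfl | hb, hbv⟩
    · exact (hbv rfl).elim
    · exact hN b hb

lemma PFree.isDisjointUnionOn_or_isJoinOn_insert (h : PFree G 4) {T : Set V} {v : V}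
    (hv : v ∉ T) (hT : IsDisjointUnionOn G T ∨ IsJoinOn G T) :
    IsDisjointUnionOn G (insert v T) ∨ IsJoinOn G (insert v T) := by
  rcases hT with hT | hT
  · rw [← isJoinOn_compl_iff] at hT
    have := h.compl.isDisjointUnionOn_or_isJoinOn_insert_of_isJoinOn hv hT
    rwa [isDisjointUnionOn_compl_iff, isJoinOn_compl_iff, or_comm] at this
  · exact h.isDisjointUnionOn_or_isJoinOn_insert_of_isJoinOn hv hT

theorem PFree.isDisjointUnionOn_or_isJoinOn (h : PFree G 4) (S : Finset V) (hS : 2 ≤ S.card) :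
    IsDisjointUnionOn G S ∨ IsJoinOn G S := by
  classical
  induction S using Finset.induction_on with
  | empty => simp at hS
  | insert v T hvT ih =>
    rw [Finset.card_insert_of_notMem hvT] at hS
    rw [Finset.coe_insert]
    obtain hT | hT := le_or_gt 2 T.card
    · exact h.isDisjointUnionOn_or_isJoinOn_insert (by simpa using hvT) (ih hT)
    · obtain ⟨w, rfl⟩ := Finset.card_eq_one.1 (show T.card = 1 by omega)
      rw [Finset.coe_singleton]
      exact isDisjointUnionOn_or_isJoinOn_pair (by simpa using hvT)

lemma Connected.not_isDisjointUnionOn_univ (hG : G.Connected) : ¬ IsDisjointUnionOn G univ := by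
  rintro ⟨A, -, ⟨a, ha⟩, ⟨b, -, hb⟩, hAB⟩
  obtain ⟨p⟩ := hG.preconnected a b
  obtain ⟨d, -, hd₁, hd₂⟩ := p.exists_boundary_dart A ha hb
  exact hAB _ hd₁ _ ⟨mem_univ _, hd₂⟩ d.adj

end SimpleGraph

theorem stmt6 {V : Type} [Fintype V] (G : SimpleGraph V)
    (hconn : G.Connected) (hfree : PFree G 4) (hcard : 2 ≤ Fintype.card V) :
    ∃ A : Set V, A.Nonempty ∧ Aᶜ.Nonempty ∧ ∀ a ∈ A, ∀ b ∉ A, G.Adj a b := by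
  classical
  have hsplit := hfree.isDisjointUnionOn_or_isJoinOn Finset.univ (by rwa [Finset.card_univ])
  rw [Finset.coe_univ] at hsplit
  obtain hunion | ⟨A, -, hA, ⟨b, -, hb⟩, hAB⟩ := hsplit
  · exact absurd hunion hconn.not_isDisjointUnionOn_univ
  · exact ⟨A, hA, ⟨b, hb⟩, fun a ha b hb => hAB a ha b ⟨Set.mem_univ b, hb⟩⟩
end

section
/- Let R = K[z_1, ..., z_r] be a polynomial ring over a field K with a term order <, and let I and J be homogeneous ideals of R. Then in_<(I + J) = in_<(I) + in_<(J) if and only if in_<(I ∩ J) = in_<(I) ∩ in_<(J). -/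
open MvPolynomial

noncomputable section

variable {K : Type} [Field K] {σ : Type}

/-- `p` is homogeneous of degree `z : ℤ` (the zero polynomial is homogeneous of any degree). -/
def IsHomZ (p : MvPolynomial σ K) (z : ℤ) : Prop :=
  ∀ d ∈ p.support, (d.sum fun _ e => (e : ℤ)) = z

/-- Homogeneous elements of degree `z` of the polynomial ring, as an additive subgroup. -/
def polyGr (K : Type) [Field K] (σ : Type) (z : ℤ) :
    AddSubgroup (MvPolynomial σ K) where
  carrier := {p | IsHomZ p z}
  zero_mem' := by intro d hd; simp at hd
  add_mem' := by
    classical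
    intro p q hp hq d hd
    rcases Finset.mem_union.mp (MvPolynomial.support_add hd) with h | h
    · exact hp d h
    · exact hq d h
  neg_mem' := by
    intro p hp d hd
    exact hp d (by simpa using hd)

/-- An element of a graded free module `B →₀ S`, with generator `b` in degree `dg b`,
is homogeneous of degree `z`. -/
def FinsuppHomog {B : Type} (dg : B → ℤ) (x : B →₀ MvPolynomial σ K) (z : ℤ) : Prop :=
  ∀ b, IsHomZ (x b) (z - dg b)

/-- A graded free resolution of a module `M` over the polynomial ring,
with degree-`0` (i.e. graded) differentials; the grading of `M` is recorded by
the family of additive subgroups `gr`. -/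
structure GradedFreeResolution {M : Type} [AddCommGroup M]
    [Module (MvPolynomial σ K) M] (gr : ℤ → AddSubgroup M) where
  B : ℕ → Type
  dg : ∀ i, B i → ℤ
  φ : ∀ i, (B (i + 1) →₀ MvPolynomial σ K) →ₗ[MvPolynomial σ K]
        (B i →₀ MvPolynomial σ K)
  π : (B 0 →₀ MvPolynomial σ K) →ₗ[MvPolynomial σ K] M
  φ_graded : ∀ i b, FinsuppHomog (dg i) (φ i (Finsupp.single b 1)) (dg (i + 1) b)
  π_graded : ∀ b, π (Finsupp.single b 1) ∈ gr (dg 0 b)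
  π_surj : Function.Surjective π
  exact0 : Function.Exact (φ 0) π
  exact : ∀ i, Function.Exact (φ (i + 1)) (φ i)

/-- Castelnuovo–Mumford regularity of a graded module, defined as the infimum over
all graded free resolutions of the largest twist: `reg M = min_F max {deg b - i}`;
the minimal free resolution realizes this infimum. -/
def moduleReg (K : Type) [Field K] (σ : Type) {M : Type} [AddCommGroup M]
    [Module (MvPolynomial σ K) M] (gr : ℤ → AddSubgroup M) : ℤ :=
  sInf {r : ℤ | ∃ F : GradedFreeResolution (K := K) (σ := σ) gr,
    ∀ i b, F.dg i b ≤ r + i}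

/-- Grading on (the underlying module of) a homogeneous ideal. -/
def idealGr (I : Ideal (MvPolynomial σ K)) (z : ℤ) : AddSubgroup I where
  carrier := {x | IsHomZ (x : MvPolynomial σ K) z}
  zero_mem' := by intro d hd; simp at hd
  add_mem' := by
    classical
    intro p q hp hq d hd
    rcases Finset.mem_union.mp (MvPolynomial.support_add hd) with h | h
    · exact hp d h
    · exact hq d h
  neg_mem' := by
    intro p hp d hd
    exact hp d (by simpa using hd)

/-- Grading on the quotient `S/I` of the polynomial ring by a homogeneous ideal. -/
def quotGr (I : Ideal (MvPolynomial σ K)) (z : ℤ) :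
    AddSubgroup (MvPolynomial σ K ⧸ I) :=
  (polyGr K σ z).map (Ideal.Quotient.mk I).toAddMonoidHom

/-- The Castelnuovo–Mumford regularity `reg I` of a homogeneous ideal. -/
def idealReg (I : Ideal (MvPolynomial σ K)) : ℤ :=
  moduleReg K σ (idealGr I)

/-- The Castelnuovo–Mumford regularity `reg S/I`. -/
def quotReg (I : Ideal (MvPolynomial σ K)) : ℤ :=
  moduleReg K σ (quotGr I)

/-- The binomial edge ideal of a graph `G` on `[n]`, in
`S = K[x_1, …, x_n, y_1, …, y_n]` where `x_i = X (inl i)` and `y_i = X (inr i)`. -/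
def beIdeal (K : Type) [Field K] {n : ℕ} (G : SimpleGraph (Fin n)) :
    Ideal (MvPolynomial (Fin n ⊕ Fin n) K) :=
  Ideal.span {f | ∃ i j, G.Adj i j ∧
    f = X (Sum.inl i) * X (Sum.inr j) - X (Sum.inl j) * X (Sum.inr i)}

/-- The initial ideal of `I` with respect to a monomial order `m`: the ideal generated
by the leading monomials of the nonzero elements of `I`. -/
def initialIdeal (m : MonomialOrder σ) (I : Ideal (MvPolynomial σ K)) :
    Ideal (MvPolynomial σ K) :=
  Ideal.span {g | ∃ f ∈ I, ∃ d ∈ f.support,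
    (∀ d' ∈ f.support, m.toSyn d' ≤ m.toSyn d) ∧ g = monomial d (1 : K)}

/-- A finite injective resolution `0 → M → I⁰ → I¹ → ⋯ → Iⁿ → 0`. -/
structure FiniteInjectiveResolution (R : Type) [CommRing R] (M : Type) [AddCommGroup M]
    [Module R M] where
  n : ℕ
  I : ℕ → Type
  acg : ∀ i, AddCommGroup (I i)
  mod : ∀ i, @Module R (I i) _ (acg i).toAddCommMonoid
  inj : ∀ i, @Module.Injective R _ (I i) (acg i) (mod i)
  ι : @LinearMap R R _ _ (RingHom.id R) M (I 0) _ (acg 0).toAddCommMonoid _ (mod 0)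
  d : ∀ i, @LinearMap R R _ _ (RingHom.id R) (I i) (I (i + 1))
        (acg i).toAddCommMonoid (acg (i + 1)).toAddCommMonoid (mod i) (mod (i + 1))
  ι_inj : Function.Injective ι
  ex0 : Function.Exact ι (d 0)
  ex : ∀ i, Function.Exact (d i) (d (i + 1))
  bounded : ∀ i > n, ∀ x : I i, x = 0

/-- A (finite-dimensional) Noetherian ring is Gorenstein iff it has finite injective
dimension over itself. -/
def IsGorensteinRing (R : Type) [CommRing R] : Prop :=
  IsNoetherianRing R ∧ Nonempty (FiniteInjectiveResolution R R)

end

/-!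
Write `L(V)` (`MonomialOrder.degreeSet`) for the set of leading exponents of the nonzero elements
of a set `V` of polynomials. For an ideal `I`, `L(I)` is an upper set and `in(I)` is the monomial
ideal it spans, so the two equalities amount to `L(I + J) ⊆ L(I) ∪ L(J)` and
`L(I) ∩ L(J) ⊆ L(I ∩ J)`. These only involve `I` and `J` as `K`-subspaces `V`, `W`, and both are
equivalent to the splitting property: every `u ∈ V + W` is `v + w` with `v ∈ V`, `w ∈ W` of leading
exponent at most that of `u`. Every implication is a descent on the well-ordered leading exponent,
cancelling a leading term against an element of `V`, `W` or `V ∩ W` with the same leading exponent.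
-/

namespace MonomialOrder

section CommSemiring

variable {σ R : Type*} [CommSemiring R] (m : MonomialOrder σ)

def degreeSet {S : Type*} [SetLike S (MvPolynomial σ R)] (V : S) : Set (σ →₀ ℕ) :=
  {d | ∃ f ∈ V, f ≠ 0 ∧ m.degree f = d}

variable {m}

theorem degreeSet_mono {S : Type*} [SetLike S (MvPolynomial σ R)] {V W : S}
    (h : (V : Set (MvPolynomial σ R)) ⊆ W) : m.degreeSet V ⊆ m.degreeSet W := by
  rintro _ ⟨f, hf, hf0, rfl⟩
  exact ⟨f, h hf, hf0, rfl⟩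

theorem isUpperSet_degreeSet (I : Ideal (MvPolynomial σ R)) : IsUpperSet (m.degreeSet I) := by
  classical
  rintro _ e hle ⟨f, hf, hf0, rfl⟩
  have : Nontrivial R := nontrivial_of_ne _ 0 (m.coeff_degree_ne_zero_iff.mpr hf0)
  set t := monomial (e - m.degree f) (1 : R)
  have ht : IsRegular (m.leadingCoeff t) := by
    rw [m.leadingCoeff_monomial]
    exact isRegular_one
  refine ⟨t * f, I.mul_mem_left t hf, ?_, ?_⟩
  · rw [← m.leadingCoeff_ne_zero_iff, m.leadingCoeff_mul_of_isRegular_left ht,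
      m.leadingCoeff_monomial, one_mul, m.leadingCoeff_ne_zero_iff]
    exact hf0
  · rw [m.degree_mul_of_isRegular_left ht hf0, m.degree_monomial, if_neg one_ne_zero,
      tsub_add_cancel_of_le hle]

theorem mem_support_and_forall_le_iff {f : MvPolynomial σ R} {d : σ →₀ ℕ} :
    (d ∈ f.support ∧ ∀ d' ∈ f.support, d' ≼[m] d) ↔ f ≠ 0 ∧ m.degree f = d := by
  constructor
  · rintro ⟨hd, hmax⟩
    refine ⟨fun hf => by simp [hf] at hd, m.toSyn.injective (le_antisymm ?_ (m.le_degree hd))⟩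
    exact m.degree_le_iff.mpr hmax
  · rintro ⟨hf0, rfl⟩
    exact ⟨m.degree_mem_support hf0, fun _ => m.le_degree⟩

theorem degree_add_le_of_le {f g : MvPolynomial σ R} {d : σ →₀ ℕ}
    (hf : m.degree f ≼[m] d) (hg : m.degree g ≼[m] d) : m.degree (f + g) ≼[m] d :=
  m.degree_add_le.trans (sup_le hf hg)

theorem degree_add_eq_left_or_eq_right {f g : MvPolynomial σ R}
    (h : m.degree f = m.degree g → (f + g).coeff (m.degree f) ≠ 0) :
    m.degree (f + g) = m.degree f ∨ m.degree (f + g) = m.degree g := by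
  by_cases hfg : m.degree f = m.degree g
  · refine .inl (m.toSyn.injective (le_antisymm ?_ (m.le_degree (mem_support_iff.mpr (h hfg)))))
    exact m.degree_add_le.trans (by rw [hfg, sup_idem])
  · rcases max_choice (m.toSyn (m.degree f)) (m.toSyn (m.degree g)) with hmax | hmax <;>
      rw [← m.degree_add_of_ne hfg] at hmax
    exacts [.inl (m.toSyn.injective hmax), .inr (m.toSyn.injective hmax)]

end CommSemiring

variable {σ K : Type*} [Field K] {m : MonomialOrder σ}

theorem degree_sub_div_smul_lt {f g : MvPolynomial σ K} (hg : g ≠ 0)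
    (hfg : m.degree f = m.degree g)
    (h : f - (m.leadingCoeff f / m.leadingCoeff g) • g ≠ 0) :
    m.degree (f - (m.leadingCoeff f / m.leadingCoeff g) • g) ≺[m] m.degree f := by
  refine lt_of_le_of_ne ?_ fun heq => m.coeff_degree_ne_zero_iff.mpr h ?_
  · refine m.degree_sub_le.trans (sup_le le_rfl (m.degree_smul_le.trans ?_))
    rw [hfg]
  · rw [m.toSyn.injective heq, coeff_sub, coeff_smul, smul_eq_mul, ← leadingCoeff, hfg,
      ← leadingCoeff, div_mul_cancel₀ _ (m.leadingCoeff_ne_zero_iff.mpr hg), sub_self]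

variable (m) in
def SplitsByDegree (V W : Submodule K (MvPolynomial σ K)) : Prop :=
  ∀ u ∈ V ⊔ W, ∃ v ∈ V, ∃ w ∈ W, v + w = u ∧ m.degree v ≼[m] m.degree u ∧
    m.degree w ≼[m] m.degree u

variable {V W : Submodule K (MvPolynomial σ K)}

theorem splitsByDegree_of_degreeSet_sup_subset
    (h : m.degreeSet (V ⊔ W) ⊆ m.degreeSet V ∪ m.degreeSet W) :
    m.SplitsByDegree V W := by
  intro u
  induction u using (InvImage.wf (fun p => m.toSyn (m.degree p)) wellFounded_lt).induction with
  | _ u ih =>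
  intro hu
  by_cases hu0 : u = 0
  · subst hu0
    exact ⟨0, V.zero_mem, 0, W.zero_mem, add_zero 0, le_rfl, le_rfl⟩
  obtain ⟨p, hp, hp0, hpu⟩ : ∃ p, (p ∈ V ∨ p ∈ W) ∧ p ≠ 0 ∧ m.degree p = m.degree u := by
    obtain ⟨p, hp, hp0, hpu⟩ | ⟨p, hp, hp0, hpu⟩ := h ⟨u, hu, hu0, rfl⟩
    exacts [⟨p, .inl hp, hp0, hpu⟩, ⟨p, .inr hp, hp0, hpu⟩]
  set c := m.leadingCoeff u / m.leadingCoeff p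
  have hcp : m.degree (c • p) ≼[m] m.degree u := m.degree_smul_le.trans (hpu ▸ le_rfl)
  have hcp_mem : c • p ∈ V ⊔ W := by
    rcases hp with hp | hp
    exacts [Submodule.mem_sup_left (V.smul_mem c hp), Submodule.mem_sup_right (W.smul_mem c hp)]
  obtain ⟨v, hv, w, hw, hvw, hvu, hwu⟩ : ∃ v ∈ V, ∃ w ∈ W, v + w = u - c • p ∧
      m.degree v ≼[m] m.degree u ∧ m.degree w ≼[m] m.degree u := by
    by_cases hu' : u - c • p = 0
    · exact ⟨0, V.zero_mem, 0, W.zero_mem, by rw [hu', add_zero], by simp, by simp⟩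
    have hlt := m.degree_sub_div_smul_lt hp0 hpu.symm hu'
    obtain ⟨v, hv, w, hw, hvw, hvu, hwu⟩ := ih _ hlt (sub_mem hu hcp_mem)
    exact ⟨v, hv, w, hw, hvw, hvu.trans hlt.le, hwu.trans hlt.le⟩
  rcases hp with hp | hp
  · refine ⟨v + c • p, add_mem hv (V.smul_mem c hp), w, hw, ?_,
      degree_add_le_of_le hvu hcp, hwu⟩
    rw [add_right_comm, hvw, sub_add_cancel]
  · refine ⟨v, hv, w + c • p, add_mem hw (W.smul_mem c hp), ?_, hvu,
      degree_add_le_of_le hwu hcp⟩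
    rw [← add_assoc, hvw, sub_add_cancel]

theorem SplitsByDegree.degreeSet_inter_subset (h : m.SplitsByDegree V W) :
    m.degreeSet V ∩ m.degreeSet W ⊆ m.degreeSet (V ⊓ W) := by
  rintro _ ⟨⟨f, hf, hf0, rfl⟩, g, hg, hg0, hgf⟩
  set g' := (m.leadingCoeff f / m.leadingCoeff g) • g
  have hg' : g' ∈ W := W.smul_mem _ hg
  by_cases hfg : f - g' = 0
  · rw [sub_eq_zero] at hfg
    exact ⟨f, ⟨hf, hfg ▸ hg'⟩, hf0, rfl⟩
  have hlt := m.degree_sub_div_smul_lt hg0 hgf.symm hfg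
  obtain ⟨v, hv, w, hw, hvw, hvf, -⟩ :=
    h _ (sub_mem (Submodule.mem_sup_left hf) (Submodule.mem_sup_right hg'))
  have hv_lt : m.degree v ≺[m] m.degree f := hvf.trans_lt hlt
  refine ⟨f - v, ⟨sub_mem hf hv, ?_⟩, ?_, m.degree_sub_of_lt hv_lt⟩
  · rw [show f - v = g' + w by linear_combination -hvw]
    exact add_mem hg' hw
  · rw [← m.leadingCoeff_ne_zero_iff, m.leadingCoeff_sub_of_lt hv_lt]
    exact m.leadingCoeff_ne_zero_iff.mpr hf0

theorem degreeSet_sup_subset_of_degreeSet_inter_subset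
    (h : m.degreeSet V ∩ m.degreeSet W ⊆ m.degreeSet (V ⊓ W)) :
    m.degreeSet (V ⊔ W) ⊆ m.degreeSet V ∪ m.degreeSet W := by
  rintro _ ⟨u, hu, hu0, rfl⟩
  obtain ⟨v, hv, w, hw, rfl⟩ := Submodule.mem_sup.mp hu
  clear hu
  induction v using (InvImage.wf (fun p => m.toSyn (m.degree p)) wellFounded_lt).induction
    generalizing w with
  | _ v ih =>
  by_cases hv0 : v = 0
  · subst hv0
    rw [zero_add] at hu0 ⊢
    exact .inr ⟨w, hw, hu0, rfl⟩
  by_cases hw0 : w = 0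
  · subst hw0
    rw [add_zero] at hu0 ⊢
    exact .inl ⟨v, hv, hv0, rfl⟩
  by_cases hcancel : m.degree v = m.degree w ∧ (v + w).coeff (m.degree v) = 0
  · obtain ⟨p, ⟨hpV, hpW⟩, hp0, hpv⟩ := h ⟨⟨v, hv, hv0, rfl⟩, w, hw, hw0, hcancel.1.symm⟩
    set c := m.leadingCoeff v / m.leadingCoeff p
    have hw' : w + c • p ∈ W := add_mem hw (W.smul_mem c hpW)
    rw [show v + w = (v - c • p) + (w + c • p) by abel] at hu0 ⊢
    by_cases hv' : v - c • p = 0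
    · rw [hv', zero_add] at hu0 ⊢
      exact .inr ⟨_, hw', hu0, rfl⟩
    exact ih _ (m.degree_sub_div_smul_lt hp0 hpv.symm hv') (sub_mem hv (V.smul_mem c hpV)) _ hw'
      hu0
  rcases degree_add_eq_left_or_eq_right (not_and.mp hcancel) with hdeg | hdeg
  exacts [.inl ⟨v, hv, hv0, hdeg.symm⟩, .inr ⟨w, hw, hw0, hdeg.symm⟩]

theorem degreeSet_sup_subset_iff_degreeSet_inter_subset :
    m.degreeSet (V ⊔ W) ⊆ m.degreeSet V ∪ m.degreeSet W ↔
      m.degreeSet V ∩ m.degreeSet W ⊆ m.degreeSet (V ⊓ W) :=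
  ⟨fun h => (splitsByDegree_of_degreeSet_sup_subset h).degreeSet_inter_subset,
    degreeSet_sup_subset_of_degreeSet_inter_subset⟩

end MonomialOrder

namespace MvPolynomial

variable {σ R : Type*} [CommSemiring R]

theorem span_monomial_image_le_iff [Nontrivial R] {S T : Set (σ →₀ ℕ)} (hT : IsUpperSet T) :
    Ideal.span ((fun d => monomial d (1 : R)) '' S) ≤
        Ideal.span ((fun d => monomial d (1 : R)) '' T) ↔ S ⊆ T := by
  refine ⟨fun h s hs => ?_, fun h => Ideal.span_mono (Set.image_mono h)⟩
  obtain ⟨t, ht, hts⟩ := mem_ideal_span_monomial_image.mp (h (Ideal.subset_span ⟨s, hs, rfl⟩)) s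
    (by classical simp [coeff_monomial])
  exact hT hts ht

theorem span_monomial_image_inter {S T : Set (σ →₀ ℕ)} (hS : IsUpperSet S) (hT : IsUpperSet T) :
    Ideal.span ((fun d => monomial d (1 : R)) '' (S ∩ T)) =
      Ideal.span ((fun d => monomial d (1 : R)) '' S) ⊓
        Ideal.span ((fun d => monomial d (1 : R)) '' T) := by
  refine le_antisymm (le_inf (Ideal.span_mono (Set.image_mono Set.inter_subset_left))
    (Ideal.span_mono (Set.image_mono Set.inter_subset_right))) fun p hp => ?_
  rw [Submodule.mem_inf, mem_ideal_span_monomial_image, mem_ideal_span_monomial_image] at hp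
  refine mem_ideal_span_monomial_image.mpr fun e he => ⟨e, ?_, le_rfl⟩
  obtain ⟨s, hs, hse⟩ := hp.1 e he
  obtain ⟨t, ht, hte⟩ := hp.2 e he
  exact ⟨hS hse hs, hT hte ht⟩

end MvPolynomial

section InitialIdeal

variable {σ K : Type} [Field K] (m : MonomialOrder σ)

theorem initialIdeal_eq_span_degreeSet (I : Ideal (MvPolynomial σ K)) :
    initialIdeal m I = Ideal.span ((fun d => monomial d (1 : K)) '' m.degreeSet I) := by
  rw [initialIdeal]
  congr 1
  ext g
  constructor
  · rintro ⟨f, hf, d, hd, hmax, rfl⟩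
    obtain ⟨hf0, rfl⟩ := m.mem_support_and_forall_le_iff.mp ⟨hd, hmax⟩
    exact ⟨_, ⟨f, hf, hf0, rfl⟩, rfl⟩
  · rintro ⟨_, ⟨f, hf, hf0, rfl⟩, rfl⟩
    obtain ⟨hd, hmax⟩ := m.mem_support_and_forall_le_iff.mpr ⟨hf0, rfl⟩
    exact ⟨f, hf, _, hd, hmax, rfl⟩

variable {m} in
theorem initialIdeal_mono {I J : Ideal (MvPolynomial σ K)} (h : I ≤ J) :
    initialIdeal m I ≤ initialIdeal m J := by
  rw [initialIdeal_eq_span_degreeSet, initialIdeal_eq_span_degreeSet]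
  exact Ideal.span_mono (Set.image_mono (MonomialOrder.degreeSet_mono h))

theorem initialIdeal_sup_eq_iff (I J : Ideal (MvPolynomial σ K)) :
    initialIdeal m (I ⊔ J) = initialIdeal m I ⊔ initialIdeal m J ↔
      m.degreeSet (I ⊔ J) ⊆ m.degreeSet I ∪ m.degreeSet J := by
  rw [le_antisymm_iff, and_iff_left (sup_le (initialIdeal_mono le_sup_left)
      (initialIdeal_mono le_sup_right)),
    initialIdeal_eq_span_degreeSet, initialIdeal_eq_span_degreeSet,
    initialIdeal_eq_span_degreeSet, ← Ideal.span_union, ← Set.image_union,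
    MvPolynomial.span_monomial_image_le_iff
      ((m.isUpperSet_degreeSet I).union (m.isUpperSet_degreeSet J))]

theorem initialIdeal_inf_eq_iff (I J : Ideal (MvPolynomial σ K)) :
    initialIdeal m (I ⊓ J) = initialIdeal m I ⊓ initialIdeal m J ↔
      m.degreeSet I ∩ m.degreeSet J ⊆ m.degreeSet (I ⊓ J) := by
  rw [le_antisymm_iff, and_iff_right (le_inf (initialIdeal_mono inf_le_left)
      (initialIdeal_mono inf_le_right)),
    initialIdeal_eq_span_degreeSet, initialIdeal_eq_span_degreeSet,
    initialIdeal_eq_span_degreeSet,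
    ← MvPolynomial.span_monomial_image_inter (m.isUpperSet_degreeSet I)
      (m.isUpperSet_degreeSet J),
    MvPolynomial.span_monomial_image_le_iff (m.isUpperSet_degreeSet _)]

end InitialIdeal

theorem stmt10_general (K : Type) [Field K] (r : ℕ) (m : MonomialOrder (Fin r))
    (I J : Ideal (MvPolynomial (Fin r) K)) :
    initialIdeal m (I + J) = initialIdeal m I + initialIdeal m J ↔
      initialIdeal m (I ⊓ J) = initialIdeal m I ⊓ initialIdeal m J := by
  rw [Submodule.add_eq_sup, Submodule.add_eq_sup, initialIdeal_sup_eq_iff,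
    initialIdeal_inf_eq_iff]
  have key := m.degreeSet_sup_subset_iff_degreeSet_inter_subset
    (V := I.restrictScalars K) (W := J.restrictScalars K)
  rwa [← Submodule.restrictScalars_sup, ← Submodule.restrictScalars_inf] at key

theorem stmt10 (K : Type) [Field K] (r : ℕ) (m : MonomialOrder (Fin r))
    (I J : Ideal (MvPolynomial (Fin r) K))
    (hI : ∃ T : Set (MvPolynomial (Fin r) K),
      (∀ f ∈ T, ∃ d : ℕ, f.IsHomogeneous d) ∧ Ideal.span T = I)
    (hJ : ∃ T : Set (MvPolynomial (Fin r) K),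
      (∀ f ∈ T, ∃ d : ℕ, f.IsHomogeneous d) ∧ Ideal.span T = J) :
    initialIdeal m (I + J) = initialIdeal m I + initialIdeal m J ↔
      initialIdeal m (I ⊓ J) = initialIdeal m I ⊓ initialIdeal m J :=
  stmt10_general K r m I J
end

section
/- Let K be a field, S = K[x_1,...,x_n, y_1,...,y_n], and G a finite simple graph on [n] with binomial edge ideal J_G = (x_i y_j − x_j y_i : {i,j} ∈ E(G), i < j). Fix any term order < on S and indices i_1,...,i_t ∈ [n]. Then in_<(J_G + (x_{i_1}, y_{i_1}, ..., x_{i_t}, y_{i_t})) = in_<(J_G) + (x_{i_1}, y_{i_1}, ..., x_{i_t}, y_{i_t}). -/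
open MvPolynomial

noncomputable section AuxProof

variable {K : Type} [Field K] {σ : Type}

/-- The algebra map killing the variables satisfying `P`. -/
def killMap (P : σ → Prop) [DecidablePred P] :
    MvPolynomial σ K →ₐ[K] MvPolynomial σ K :=
  aeval (fun s => if P s then 0 else X s)

lemma killMap_X (P : σ → Prop) [DecidablePred P] (s : σ) :
    killMap (K := K) P (X s) = if P s then 0 else X s := by
  simp [killMap]

lemma killMap_monomial (P : σ → Prop) [DecidablePred P] (d : σ →₀ ℕ) (c : K) :
    killMap P (monomial d c) =
      if ∀ s ∈ d.support, ¬ P s then monomial d c else 0 := by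
  rw [killMap, aeval_monomial]
  split_ifs with h
  · rw [monomial_eq]
    congr 1
    apply Finsupp.prod_congr
    intro s hs
    rw [if_neg (h s hs)]
  · push_neg at h
    obtain ⟨s, hs, hPs⟩ := h
    rw [Finsupp.prod, Finset.prod_eq_zero hs, mul_zero]
    rw [if_pos hPs]
    exact zero_pow (Finsupp.mem_support_iff.mp hs)

lemma coeff_killMap (P : σ → Prop) [DecidablePred P] (f : MvPolynomial σ K)
    (d : σ →₀ ℕ) :
    coeff d (killMap P f) = if ∀ s ∈ d.support, ¬ P s then coeff d f else 0 := by
  classical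
  conv_lhs => rw [f.as_sum]
  rw [map_sum, MvPolynomial.coeff_sum]
  split_ifs with h
  · by_cases hd : d ∈ f.support
    · rw [Finset.sum_eq_single_of_mem d hd]
      · rw [killMap_monomial, if_pos h, coeff_monomial, if_pos rfl]
      · intro e he hne
        rw [killMap_monomial]
        split_ifs with he'
        · rw [coeff_monomial, if_neg hne]
        · simp
    · rw [Finset.sum_eq_zero, (MvPolynomial.notMem_support_iff).mp hd]
      intro e he
      rw [killMap_monomial]
      split_ifs with he'
      · rw [coeff_monomial, if_neg]
        intro hde; exact hd (hde ▸ he)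
      · simp
  · apply Finset.sum_eq_zero
    intro e he
    rw [killMap_monomial]
    split_ifs with he'
    · rw [coeff_monomial, if_neg]
      rintro rfl; exact h he'
    · simp

lemma support_killMap (P : σ → Prop) [DecidablePred P] (f : MvPolynomial σ K) :
    (killMap P f).support ⊆ f.support := by
  intro d hd
  rw [MvPolynomial.mem_support_iff] at hd ⊢
  rw [coeff_killMap] at hd
  intro h0
  apply hd
  split_ifs <;> simp [h0]

lemma initial_add_vars (m : MonomialOrder σ) (I : Ideal (MvPolynomial σ K))
    (P : σ → Prop) [DecidablePred P]
    (hI : ∀ f ∈ I, killMap P f ∈ I) :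
    initialIdeal m (I + Ideal.span {g | ∃ s, P s ∧ g = X s}) =
      initialIdeal m I + Ideal.span {g | ∃ s, P s ∧ g = X s} := by
  classical
  set L : Ideal (MvPolynomial σ K) := Ideal.span {g | ∃ s, P s ∧ g = X s} with hL
  have hLker : ∀ b ∈ L, killMap (K := K) P b = 0 := by
    intro b hb
    have : L ≤ RingHom.ker (killMap (K := K) P : MvPolynomial σ K →+* MvPolynomial σ K) := by
      rw [hL, Ideal.span_le]
      rintro g ⟨s, hPs, rfl⟩
      simp [RingHom.mem_ker, killMap_X, hPs]
    exact this hb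
  apply le_antisymm
  · rw [initialIdeal, Ideal.span_le]
    rintro g ⟨f, hf, d, hd, hmax, rfl⟩
    by_cases hdP : ∀ s ∈ d.support, ¬ P s
    · -- leading monomial avoids killed variables; use killMap f ∈ I
      obtain ⟨a, ha, b, hb, rfl⟩ := Submodule.mem_sup.mp hf
      have hka : killMap (K := K) P (a + b) = killMap P a := by
        rw [map_add, hLker b hb, add_zero]
      have hfI : killMap (K := K) P (a + b) ∈ I := hka ▸ hI a ha
      apply Submodule.mem_sup_left
      rw [initialIdeal]
      apply Ideal.subset_span
      refine ⟨killMap P (a + b), hfI, d, ?_, ?_, rfl⟩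
      · rw [MvPolynomial.mem_support_iff, coeff_killMap, if_pos hdP]
        exact MvPolynomial.mem_support_iff.mp hd
      · intro d' hd'
        exact hmax d' (support_killMap P _ hd')
    · -- leading monomial is divisible by a killed variable
      push_neg at hdP
      obtain ⟨s, hs, hPs⟩ := hdP
      apply Submodule.mem_sup_right
      have hXs : (X s : MvPolynomial σ K) ∈ L := Ideal.subset_span ⟨s, hPs, rfl⟩
      have hle : Finsupp.single s 1 ≤ d := by
        rw [Finsupp.single_le_iff]
        exact Nat.one_le_iff_ne_zero.mpr (Finsupp.mem_support_iff.mp hs)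
      have : (monomial d (1 : K)) = monomial (d - Finsupp.single s 1) 1 * X s := by
        rw [MvPolynomial.X, monomial_mul, mul_one, tsub_add_cancel_of_le hle]
      rw [this]
      exact Ideal.mul_mem_left L _ hXs
  · apply sup_le
    · rw [initialIdeal, Ideal.span_le]
      rintro g ⟨f, hf, d, hd, hmax, rfl⟩
      rw [initialIdeal]
      exact Ideal.subset_span ⟨f, Submodule.mem_sup_left hf, d, hd, hmax, rfl⟩
    · rw [hL, Ideal.span_le]
      rintro g ⟨s, hPs, rfl⟩
      have hXL : (X s : MvPolynomial σ K) ∈ I + L :=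
        Submodule.mem_sup_right (Ideal.subset_span ⟨s, hPs, rfl⟩)
      rw [initialIdeal]
      apply Ideal.subset_span
      refine ⟨X s, hXL, Finsupp.single s 1, ?_, ?_, ?_⟩
      · rw [MvPolynomial.support_X]; exact Finset.mem_singleton_self _
      · intro d' hd'
        rw [MvPolynomial.support_X, Finset.mem_singleton] at hd'
        rw [hd']
      · rw [MvPolynomial.X]

end AuxProof

theorem stmt11 (K : Type) [Field K] (n t : ℕ) (G : SimpleGraph (Fin n))
    (m : MonomialOrder (Fin n ⊕ Fin n)) (v : Fin t → Fin n) :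
    initialIdeal m (beIdeal K G +
        Ideal.span {g | ∃ k : Fin t, g = X (Sum.inl (v k)) ∨ g = X (Sum.inr (v k))}) =
      initialIdeal m (beIdeal K G) +
        Ideal.span {g | ∃ k : Fin t, g = X (Sum.inl (v k)) ∨ g = X (Sum.inr (v k))} := by
  classical
  set P : Fin n ⊕ Fin n → Prop := fun s => ∃ k : Fin t, s = Sum.inl (v k) ∨ s = Sum.inr (v k)
    with hP
  have hset : {g : MvPolynomial (Fin n ⊕ Fin n) K |
      ∃ k : Fin t, g = X (Sum.inl (v k)) ∨ g = X (Sum.inr (v k))} =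
      {g | ∃ s, P s ∧ g = X s} := by
    ext g
    constructor
    · rintro ⟨k, h | h⟩
      · exact ⟨Sum.inl (v k), ⟨k, Or.inl rfl⟩, h⟩
      · exact ⟨Sum.inr (v k), ⟨k, Or.inr rfl⟩, h⟩
    · rintro ⟨s, ⟨k, h | h⟩, rfl⟩
      · exact ⟨k, Or.inl (by rw [h])⟩
      · exact ⟨k, Or.inr (by rw [h])⟩
  have hQ : ∀ i : Fin n, P (Sum.inl i) ↔ ∃ k, i = v k := by
    intro i
    constructor
    · rintro ⟨k, h | h⟩
      · exact ⟨k, Sum.inl.inj h⟩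
      · exact absurd h (by simp)
    · rintro ⟨k, rfl⟩; exact ⟨k, Or.inl rfl⟩
  have hQ' : ∀ i : Fin n, P (Sum.inr i) ↔ ∃ k, i = v k := by
    intro i
    constructor
    · rintro ⟨k, h | h⟩
      · exact absurd h (by simp)
      · exact ⟨k, Sum.inr.inj h⟩
    · rintro ⟨k, rfl⟩; exact ⟨k, Or.inr rfl⟩
  have hI : ∀ f ∈ beIdeal K G, killMap P f ∈ beIdeal K G := by
    intro f hf
    refine Submodule.span_induction ?_ ?_ ?_ ?_ hf
    · rintro g ⟨i, j, hadj, rfl⟩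
      by_cases hi : ∃ k, i = v k
      · have h1 : killMap (K := K) P (X (Sum.inl i)) = 0 := by
          rw [killMap_X, if_pos ((hQ i).mpr hi)]
        have h2 : killMap (K := K) P (X (Sum.inr i)) = 0 := by
          rw [killMap_X, if_pos ((hQ' i).mpr hi)]
        rw [map_sub, map_mul, map_mul, h1, h2, zero_mul, mul_zero, sub_zero]
        exact zero_mem _
      · by_cases hj : ∃ k, j = v k
        · have h1 : killMap (K := K) P (X (Sum.inl j)) = 0 := by
            rw [killMap_X, if_pos ((hQ j).mpr hj)]
          have h2 : killMap (K := K) P (X (Sum.inr j)) = 0 := by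
            rw [killMap_X, if_pos ((hQ' j).mpr hj)]
          rw [map_sub, map_mul, map_mul, h1, h2, mul_zero, zero_mul, sub_zero]
          exact zero_mem _
        · have h1 : killMap (K := K) P (X (Sum.inl i)) = X (Sum.inl i) := by
            rw [killMap_X, if_neg (fun h => hi ((hQ i).mp h))]
          have h2 : killMap (K := K) P (X (Sum.inr i)) = X (Sum.inr i) := by
            rw [killMap_X, if_neg (fun h => hi ((hQ' i).mp h))]
          have h3 : killMap (K := K) P (X (Sum.inl j)) = X (Sum.inl j) := by
            rw [killMap_X, if_neg (fun h => hj ((hQ j).mp h))]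
          have h4 : killMap (K := K) P (X (Sum.inr j)) = X (Sum.inr j) := by
            rw [killMap_X, if_neg (fun h => hj ((hQ' j).mp h))]
          rw [map_sub, map_mul, map_mul, h1, h2, h3, h4]
          exact Ideal.subset_span ⟨i, j, hadj, rfl⟩
    · simp
    · intro a b _ _ ha hb
      rw [map_add]; exact add_mem ha hb
    · intro r a _ ha
      rw [smul_eq_mul, map_mul]
      exact Ideal.mul_mem_left _ _ ha
  rw [hset]
  exact initial_add_vars m (beIdeal K G) P hI
end

section
/- Let G be a graph on [n] and T ⊆ [n], and let G_1, ..., G_c be the connected components of the induced subgraph of G on [n] \ T. Then the ideal P_T(G) = ({x_i, y_i : i ∈ T}) + J_{G̃_1} + ... + J_{G̃_c} is a prime ideal of S = K[x_1,...,x_n,y_1,...,y_n], where G̃_k denotes the complete graph on the vertex set of G_k. -/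
open MvPolynomial

/-- The graph `G` restricted to the edges avoiding `T` (so that, for `i, j ∉ T`,
reachability in it is the same as lying in the same connected component of the
induced subgraph of `G` on the complement of `T`). -/

def restrictOutside {n : ℕ} (G : SimpleGraph (Fin n)) (T : Set (Fin n)) :
    SimpleGraph (Fin n) where
  Adj a b := G.Adj a b ∧ a ∉ T ∧ b ∉ T
  symm := ⟨fun a b h => ⟨h.1.symm, h.2.2, h.2.1⟩⟩
  loopless := ⟨fun a h => G.loopless.irrefl a h.1⟩

/-!
With `c(i)` the connected component of `i ∉ T`, `P_T(G)` is the kernel of the monomial map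
`x_i ↦ t_i u_{c(i)}`, `y_i ↦ t_i w_{c(i)}` for `i ∉ T` and `x_i, y_i ↦ 0` for `i ∈ T` into a
polynomial ring, hence prime. The generators clearly lie in the kernel. Conversely, the map has a
left inverse modulo `P_T(G)` once any two monomials with the same image are congruent modulo
`P_T(G)`. Two such monomials (avoiding `T`) have the same degree `a_i + b_i` in `x_i, y_i` at every
vertex and the same total `x`-degree on every component. If they differ, some component has vertices
`i, j` with `a_i > a'_i` and `a_j < a'_j`, hence `b_j > 0`; exchanging `x_i y_j` for `x_j y_i`
changes the monomial by a multiple of a generator and decreases `∑ₖ (a_k - a'_k)⁺`.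
-/

namespace MvPolynomial

variable {R σ τ : Type*} [CommRing R]

theorem ker_eq_of_monomial_fibers (φ : MvPolynomial σ R →ₐ[R] MvPolynomial τ R)
    (I : Ideal (MvPolynomial σ R)) (hI : I ≤ RingHom.ker φ) (good : (σ →₀ ℕ) → Prop)
    (E : (σ →₀ ℕ) → τ →₀ ℕ) (hbad : ∀ d, ¬ good d → monomial d 1 ∈ I)
    (hgood : ∀ d, good d → φ (monomial d 1) = monomial (E d) 1)
    (hfiber : ∀ d d', good d → good d' → E d = E d' → monomial d 1 - monomial d' 1 ∈ I) :
    RingHom.ker φ = I := by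
  classical
  refine le_antisymm (fun f hf => ?_) hI
  let q := Ideal.Quotient.mkₐ R I
  -- A left inverse of `φ` modulo `I`: a monomial in the image goes to the class of any preimage.
  let sec : MvPolynomial τ R →ₗ[R] MvPolynomial σ R ⧸ I := (basisMonomials τ R).constr R
    fun e => if h : ∃ d, good d ∧ E d = e then q (monomial h.choose 1) else 0
  have hsec : sec ∘ₗ φ.toLinearMap = q.toLinearMap := by
    refine (basisMonomials σ R).ext fun d => ?_
    simp only [coe_basisMonomials, LinearMap.comp_apply, AlgHom.toLinearMap_apply]
    by_cases hd : good d
    · have h : ∃ d', good d' ∧ E d' = E d := ⟨d, hd, rfl⟩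
      rw [hgood d hd, show monomial (E d) (1 : R) = basisMonomials τ R (E d) by simp,
        Module.Basis.constr_basis, dif_pos h]
      exact Ideal.Quotient.eq.2 (hfiber _ _ h.choose_spec.1 hd h.choose_spec.2)
    · rw [RingHom.mem_ker.1 (hI (hbad d hd)), map_zero]
      exact (Ideal.Quotient.eq_zero_iff_mem.2 (hbad d hd)).symm
  rw [← Ideal.Quotient.eq_zero_iff_mem]
  simpa [RingHom.mem_ker.1 hf, q] using (LinearMap.congr_fun hsec f).symm

end MvPolynomial

theorem Finset.exists_lt_of_sum_eq_of_lt {ι M : Type*} [AddCommMonoid M] [LinearOrder M]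
    [IsOrderedCancelAddMonoid M] {s : Finset ι} {f g : ι → M}
    (h : ∑ i ∈ s, f i = ∑ i ∈ s, g i) {i : ι} (hi : i ∈ s) (hlt : g i < f i) :
    ∃ j ∈ s, f j < g j := by
  by_contra! H
  exact (Finset.sum_lt_sum H ⟨i, hi, hlt⟩).ne h.symm

open Finsupp

noncomputable section PartitionIdeal

variable (R : Type*) [CommRing R] {V C : Type*} (T : Set V) (c : V → C)

def partitionIdeal : Ideal (MvPolynomial (V ⊕ V) R) :=
  Ideal.span ({f | ∃ i ∈ T, f = X (Sum.inl i) ∨ f = X (Sum.inr i)} ∪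
    {f | ∃ i j, i ∉ T ∧ j ∉ T ∧ i ≠ j ∧ c i = c j ∧
      f = X (Sum.inl i) * X (Sum.inr j) - X (Sum.inl j) * X (Sum.inr i)})

/-- `paramMap` sends `x_i = X (inl i)` to `t_i u_{c i}` and `y_i = X (inr i)` to `t_i w_{c i}`
(for `i ∉ T`), where `t_i = X (inl i)`, `u_k = X (inr (inl k))`, `w_k = X (inr (inr k))`. -/
def paramExponent : V ⊕ V → V ⊕ C ⊕ C →₀ ℕ
  | .inl i => single (.inl i) 1 + single (.inr (.inl (c i))) 1
  | .inr i => single (.inl i) 1 + single (.inr (.inr (c i))) 1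

open scoped Classical in
def paramMap : MvPolynomial (V ⊕ V) R →ₐ[R] MvPolynomial (V ⊕ C ⊕ C) R :=
  aeval fun s => if Sum.elim id id s ∈ T then 0 else monomial (paramExponent c s) 1

def imageExponent : (V ⊕ V →₀ ℕ) →ₗ[ℕ] V ⊕ C ⊕ C →₀ ℕ :=
  linearCombination ℕ (paramExponent c)

def AvoidsVars (d : V ⊕ V →₀ ℕ) : Prop :=
  ∀ s, Sum.elim id id s ∈ T → d s = 0

variable {R T c}

theorem X_mem_partitionIdeal {s : V ⊕ V} (hs : Sum.elim id id s ∈ T) :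
    X s ∈ partitionIdeal R T c :=
  Ideal.subset_span (Or.inl (by cases s <;> exact ⟨_, hs, by simp⟩))

theorem binomial_mem_partitionIdeal {i j : V} (hi : i ∉ T) (hj : j ∉ T) (hij : i ≠ j)
    (hc : c i = c j) :
    X (Sum.inl i) * X (Sum.inr j) - X (Sum.inl j) * X (Sum.inr i) ∈ partitionIdeal R T c :=
  Ideal.subset_span (Or.inr ⟨i, j, hi, hj, hij, hc, rfl⟩)

theorem partitionIdeal_le_ker : partitionIdeal R T c ≤ RingHom.ker (paramMap R T c) := by
  rw [partitionIdeal, Ideal.span_le]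
  rintro f (⟨i, hi, rfl | rfl⟩ | ⟨i, j, hi, hj, -, hc, rfl⟩)
  · simp [paramMap, hi]
  · simp [paramMap, hi]
  · simp only [SetLike.mem_coe, RingHom.mem_ker, map_sub, map_mul, paramMap, aeval_X,
      Sum.elim_inl, Sum.elim_inr, id_eq, hi, hj, ↓reduceIte, monomial_mul, mul_one, paramExponent,
      hc, sub_eq_zero]
    ac_rfl

theorem monomial_mem_partitionIdeal {d : V ⊕ V →₀ ℕ} (hd : ¬ AvoidsVars T d) :
    monomial d 1 ∈ partitionIdeal R T c := by
  unfold AvoidsVars at hd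
  push Not at hd
  obtain ⟨s, hs, hds⟩ := hd
  have hX : monomial d (1 : R) = X s * monomial (d - single s 1) 1 := by
    rw [X, monomial_mul, one_mul,
      add_tsub_cancel_of_le (single_le_iff.2 (Nat.one_le_iff_ne_zero.2 hds))]
  rw [hX]
  exact Ideal.mul_mem_right _ _ (X_mem_partitionIdeal hs)

theorem paramMap_monomial {d : V ⊕ V →₀ ℕ} (hd : AvoidsVars T d) :
    paramMap R T c (monomial d 1) = monomial (imageExponent c d) 1 := by
  rw [paramMap, aeval_monomial, imageExponent, linearCombination_apply, map_one, one_mul,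
    monomial_finsupp_sum_index, map_one, one_mul]
  refine Finsupp.prod_congr fun s hs => ?_
  rw [if_neg fun h => mem_support_iff.1 hs (hd s h), monomial_pow, one_pow]

theorem monomial_sub_monomial_swap_mem {i j : V} (hi : i ∉ T) (hj : j ∉ T) (hij : i ≠ j)
    (hc : c i = c j) (d₀ : V ⊕ V →₀ ℕ) :
    monomial (single (Sum.inl i) 1 + single (Sum.inr j) 1 + d₀) (1 : R) -
      monomial (single (Sum.inl j) 1 + single (Sum.inr i) 1 + d₀) 1 ∈ partitionIdeal R T c := by
  have h : monomial (single (Sum.inl i) 1 + single (Sum.inr j) 1 + d₀) (1 : R) -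
      monomial (single (Sum.inl j) 1 + single (Sum.inr i) 1 + d₀) 1 =
      (X (Sum.inl i) * X (Sum.inr j) - X (Sum.inl j) * X (Sum.inr i)) * monomial d₀ 1 := by
    simp only [X, monomial_mul, mul_one, sub_mul]
  rw [h]
  exact Ideal.mul_mem_right _ _ (binomial_mem_partitionIdeal hi hj hij hc)

end PartitionIdeal

section PartitionIdealFibers

variable {R : Type*} [CommRing R] {V C : Type*} [Fintype V] {T : Set V} {c : V → C}

theorem imageExponent_inl (d : V ⊕ V →₀ ℕ) (v : V) :
    imageExponent c d (Sum.inl v) = d (Sum.inl v) + d (Sum.inr v) := by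
  classical
  rw [imageExponent, linearCombination_apply, Finsupp.sum_apply,
    Finsupp.sum_fintype _ _ (by simp)]
  simp [paramExponent, Fintype.sum_sum_type, single_apply]

theorem imageExponent_inr_inl [DecidableEq C] (d : V ⊕ V →₀ ℕ) (k : C) :
    imageExponent c d (Sum.inr (Sum.inl k)) = ∑ i with c i = k, d (Sum.inl i) := by
  classical
  rw [imageExponent, linearCombination_apply, Finsupp.sum_apply,
    Finsupp.sum_fintype _ _ (by simp)]
  simp [paramExponent, Fintype.sum_sum_type, single_apply, Finset.sum_filter]

theorem exists_lt_lt_of_imageExponent_eq {d d' : V ⊕ V →₀ ℕ}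
    (hE : imageExponent c d = imageExponent c d') (hne : d ≠ d') :
    ∃ i j, c i = c j ∧ d' (Sum.inl i) < d (Sum.inl i) ∧ d (Sum.inl j) < d' (Sum.inl j) := by
  classical
  have hE_inl v := congr($hE (Sum.inl v))
  have hE_comp k := congr($hE (Sum.inr (Sum.inl k)))
  simp only [imageExponent_inl, imageExponent_inr_inl] at hE_inl hE_comp
  obtain ⟨k, hk⟩ : ∃ k, d (Sum.inl k) ≠ d' (Sum.inl k) := by
    by_contra! h
    refine hne (Finsupp.ext fun s => ?_)
    rcases s with v | v
    · exact h v
    · linarith [h v, hE_inl v]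
  rcases hk.lt_or_gt with hlt | hgt
  · obtain ⟨i, hi, hlt'⟩ := Finset.exists_lt_of_sum_eq_of_lt (hE_comp (c k)).symm
      (Finset.mem_filter.2 ⟨Finset.mem_univ k, rfl⟩) hlt
    exact ⟨i, k, (Finset.mem_filter.1 hi).2, hlt', hlt⟩
  · obtain ⟨j, hj, hlt'⟩ := Finset.exists_lt_of_sum_eq_of_lt (hE_comp (c k))
      (Finset.mem_filter.2 ⟨Finset.mem_univ k, rfl⟩) hgt
    exact ⟨k, j, (Finset.mem_filter.1 hj).2.symm, hgt, hlt'⟩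

theorem exists_swap_of_imageExponent_eq {d d' : V ⊕ V →₀ ℕ} (hd : AvoidsVars T d)
    (hE : imageExponent c d = imageExponent c d') (hne : d ≠ d') :
    ∃ d₁, AvoidsVars T d₁ ∧ imageExponent c d₁ = imageExponent c d ∧
      ∑ k, (d₁ (Sum.inl k) - d' (Sum.inl k)) < ∑ k, (d (Sum.inl k) - d' (Sum.inl k)) ∧
      monomial d (1 : R) - monomial d₁ 1 ∈ partitionIdeal R T c := by
  classical
  obtain ⟨i, j, hc, hi, hj⟩ := exists_lt_lt_of_imageExponent_eq hE hne
  have hij : i ≠ j := by rintro rfl; omega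
  have hyj : d' (Sum.inr j) < d (Sum.inr j) := by
    have := congr($hE (Sum.inl j))
    simp only [imageExponent_inl] at this
    omega
  have hiT : i ∉ T := fun h => by have := hd (Sum.inl i) h; omega
  have hjT : j ∉ T := fun h => by have := hd (Sum.inr j) h; omega
  obtain ⟨d₀, rfl⟩ : ∃ d₀, d = single (Sum.inl i) 1 + single (Sum.inr j) 1 + d₀ := by
    refine exists_add_of_le fun s => ?_
    rcases s with s | s <;>
      simp only [Finsupp.coe_add, Pi.add_apply, single_apply, Sum.inl.injEq, Sum.inr.injEq,
        reduceCtorEq, ↓reduceIte] <;> split_ifs <;> subst_vars <;> omega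
  simp only [Finsupp.coe_add, Pi.add_apply, single_apply, reduceCtorEq, ↓reduceIte] at hi hj
  refine ⟨single (Sum.inl j) 1 + single (Sum.inr i) 1 + d₀, fun s hs => ?_, ?_, ?_,
    monomial_sub_monomial_swap_mem hiT hjT hij hc d₀⟩
  · have := hd s hs
    rcases s with s | s <;> simp only [Finsupp.coe_add, Pi.add_apply, single_apply] at this ⊢ <;>
      split_ifs at this ⊢ <;> simp_all
  · simp only [map_add, imageExponent, linearCombination_single, paramExponent, hc, one_smul]
    ac_rfl
  · refine Finset.sum_lt_sum (fun k _ => ?_) ⟨i, Finset.mem_univ _, ?_⟩ <;>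
      simp only [Finsupp.coe_add, Pi.add_apply, single_apply, Sum.inl.injEq, reduceCtorEq,
        ↓reduceIte] <;> split_ifs <;> subst_vars <;> omega

theorem monomial_sub_mem_partitionIdeal_of_imageExponent_eq {d d' : V ⊕ V →₀ ℕ}
    (hd : AvoidsVars T d) (hd' : AvoidsVars T d') (hE : imageExponent c d = imageExponent c d') :
    monomial d (1 : R) - monomial d' 1 ∈ partitionIdeal R T c := by
  by_cases hne : d = d'
  · simp [hne]
  obtain ⟨d₁, hd₁, hE₁, hlt, hmem⟩ := exists_swap_of_imageExponent_eq (R := R) hd hE hne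
  have ih := monomial_sub_mem_partitionIdeal_of_imageExponent_eq hd₁ hd' (hE₁.trans hE)
  simpa using Ideal.add_mem _ hmem ih
termination_by ∑ k, (d (Sum.inl k) - d' (Sum.inl k))
decreasing_by exact hlt

variable (R T c)

theorem ker_paramMap : RingHom.ker (paramMap R T c) = partitionIdeal R T c :=
  ker_eq_of_monomial_fibers _ _ partitionIdeal_le_ker (AvoidsVars T) (imageExponent c)
    (fun _ => monomial_mem_partitionIdeal) (fun _ => paramMap_monomial)
    (fun _ _ => monomial_sub_mem_partitionIdeal_of_imageExponent_eq)

theorem partitionIdeal_isPrime [IsDomain R] : (partitionIdeal R T c).IsPrime :=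
  ker_paramMap R T c ▸ RingHom.ker_isPrime _

end PartitionIdealFibers

theorem stmt12 (K : Type) [Field K] (n : ℕ) (G : SimpleGraph (Fin n)) (T : Set (Fin n)) :
    (Ideal.span
      ({f | ∃ i ∈ T, f = X (Sum.inl i) ∨ f = X (Sum.inr i)} ∪
       {f | ∃ i j : Fin n, i ∉ T ∧ j ∉ T ∧ i ≠ j ∧ (restrictOutside G T).Reachable i j ∧
          f = X (Sum.inl i) * X (Sum.inr j) - X (Sum.inl j) * X (Sum.inr i)} :
        Set (MvPolynomial (Fin n ⊕ Fin n) K))).IsPrime := by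
  simpa only [partitionIdeal, SimpleGraph.ConnectedComponent.eq] using
    partitionIdeal_isPrime K T (restrictOutside G T).connectedComponentMk
end

section
/- Let G1 = ⊔_{i=1}^r G_{1i} and G2 = ⊔_{i=1}^s G_{2i} be graphs on disjoint vertex sets V1 = ∪ V_{1i} and V2 = ∪ V_{2i} with r, s ≥ 2 (i.e., both disconnected). Then the set of subsets with the cut point property for the join satisfies C(G1 * G2) = {∅} ∪ ((○_{i=1}^r C(G_{1i})) ∘ {V2}) ∪ ((○_{i=1}^s C(G_{2i})) ∘ {V1}), where A ∘ B = {A ∪ B : A ∈ A, B ∈ B} and ○ denotes the iterated join of collections. -/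
open SimpleGraph

/-!
In the join every vertex of `V1` is adjacent to every vertex of `V2`, so a vertex set meeting both
sides induces a connected graph. Hence if `T ≠ ∅` has the cut point property, `Tᶜ` lies in one side:
`T = S ∪ V2` with `S ⊆ V1` (or symmetrically). The vertices of `V2` are then cut points exactly when
`G1[V1 \ S]` has at least two components, and a vertex `x ∈ S` exactly when it is a cut point of
`G1[(V1 \ S) ∪ {x}]`. Components of `G1` do not interact, so the latter condition is decided
inside the component of `x`; and since `G1` is disconnected, "at least two components" amounts to
`S` missing a vertex of every component of `G1`. This is `S ∩ V_{1i} ∈ C(G_{1i})` for every `i`.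
-/

namespace SimpleGraph

variable {V W : Type} {G : SimpleGraph V}

lemma Reachable.eq_of_forall_adj {β : Sort*} {f : V → β} (hf : ∀ v w, G.Adj v w → f v = f w)
    {u v : V} (h : G.Reachable u v) : f u = f v := by
  obtain ⟨p⟩ := h
  induction p with
  | nil => rfl
  | cons hadj _ ih => exact (hf _ _ hadj).trans ih

def sumConnectedComponentEquiv (H : SimpleGraph W) :
    (G ⊕g H).ConnectedComponent ≃ G.ConnectedComponent ⊕ H.ConnectedComponent where
  toFun := ConnectedComponent.lift (Sum.map G.connectedComponentMk H.connectedComponentMk)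
    fun _ _ p _ => Reachable.eq_of_forall_adj (by
      rintro (u | u) (w | w) h
      · exact congrArg Sum.inl (ConnectedComponent.sound (sum_adj_inl.1 h).reachable)
      · exact absurd h (not_adj_sum_inl_inr u w)
      · exact absurd h.symm (not_adj_sum_inl_inr w u)
      · exact congrArg Sum.inr (ConnectedComponent.sound (sum_adj_inr.1 h).reachable)) p.reachable
  invFun := Sum.elim (ConnectedComponent.map Embedding.sumInl.toHom)
    (ConnectedComponent.map Embedding.sumInr.toHom)
  left_inv := ConnectedComponent.ind fun v => by cases v <;> rfl
  right_inv := by rintro (c | c) <;> induction c using ConnectedComponent.ind <;> rfl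

open scoped Classical in
noncomputable def induceUnionIsoSum {A B : Set V} (hAB : Disjoint A B)
    (hadj : ∀ a ∈ A, ∀ b ∈ B, ¬ G.Adj a b) :
    G.induce (A ∪ B) ≃g G.induce A ⊕g G.induce B where
  toEquiv := Equiv.Set.union hAB
  map_rel_iff' := by
    rintro ⟨u, hu | hu⟩ ⟨w, hw | hw⟩
    all_goals simp only [Equiv.Set.union_apply_left, Equiv.Set.union_apply_right, hu, hw]
    · simp
    · simpa using hadj u hu w hw
    · simpa using fun h => hadj w hw u hu h.symm
    · simp

end SimpleGraph

section numComp

variable {V W : Type} {G : SimpleGraph V} {H : SimpleGraph W}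

lemma numComp_congr (φ : G ≃g H) : numComp G = numComp H :=
  Nat.card_congr φ.connectedComponentEquiv

lemma numComp_eq_one_of_connected (h : G.Connected) : numComp G = 1 :=
  Nat.card_eq_one_iff_unique.2
    ⟨h.preconnected.subsingleton_connectedComponent, ⟨G.connectedComponentMk h.nonempty.some⟩⟩

lemma numComp_induce_empty : numComp (G.induce (∅ : Set V)) = 0 := by
  simp [numComp]

lemma one_lt_numComp_of_not_preconnected [Finite V] (h : ¬ G.Preconnected) : 1 < numComp G := by
  obtain ⟨u, v, huv⟩ : ∃ u v, ¬ G.Reachable u v := by simpa [Preconnected] using h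
  exact Finite.one_lt_card_iff_nontrivial.2
    ⟨G.connectedComponentMk u, G.connectedComponentMk v, by simpa using huv⟩

lemma numComp_le_numComp_induce [Finite V] {s : Set V}
    (hs : ∀ c : G.ConnectedComponent, (s ∩ c.supp).Nonempty) :
    numComp G ≤ numComp (G.induce s) := by
  refine Nat.card_le_card_of_surjective (ConnectedComponent.map (Embedding.induce s).toHom)
    fun c => ?_
  obtain ⟨v, hvs, hvc⟩ := hs c
  exact ⟨(G.induce s).connectedComponentMk ⟨v, hvs⟩, hvc⟩

lemma numComp_induce_union [Finite V] {A B : Set V} (hAB : Disjoint A B)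
    (hadj : ∀ a ∈ A, ∀ b ∈ B, ¬ G.Adj a b) :
    numComp (G.induce (A ∪ B)) = numComp (G.induce A) + numComp (G.induce B) := by
  rw [numComp_congr (induceUnionIsoSum hAB hadj), numComp,
    Nat.card_congr (sumConnectedComponentEquiv _), Nat.card_sum]
  rfl

lemma numComp_induce_eq_add [Finite V] (c : G.ConnectedComponent) (s : Set V) :
    numComp (G.induce s) =
      numComp (G.induce (s ∩ c.supp)) + numComp (G.induce (s \ c.supp)) := by
  conv_lhs => rw [← Set.inter_union_sdiff s c.supp]
  exact numComp_induce_union (Set.disjoint_sdiff_inter.symm)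
    fun a ha b hb hab => hb.2 (c.mem_supp_of_adj_mem_supp ha.2 hab)

lemma numComp_induce_union_singleton_lt_iff [Finite V] (s : Set V) (x : V) :
    numComp (G.induce (s ∪ {x})) < numComp (G.induce s) ↔
      numComp (G.induce (s ∩ (G.connectedComponentMk x).supp ∪ {x})) <
        numComp (G.induce (s ∩ (G.connectedComponentMk x).supp)) := by
  set c := G.connectedComponentMk x
  have hx : x ∈ c.supp := rfl
  have hin : (s ∪ {x}) ∩ c.supp = s ∩ c.supp ∪ {x} := by
    rw [Set.union_inter_distrib_right, Set.singleton_inter_of_mem hx]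
  have hout : (s ∪ {x}) \ c.supp = s \ c.supp := by
    simp [hx]
  rw [numComp_induce_eq_add c (s ∪ {x}), numComp_induce_eq_add c s, hin, hout]
  omega

lemma exists_iUnion_eq_iff_forall_inter_supp {P : G.ConnectedComponent → Set V → Prop}
    (hP : ∀ c T, P c T → T ⊆ c.supp) (S : Set V) :
    (∃ f : G.ConnectedComponent → Set V, (∀ c, P c (f c)) ∧ S = ⋃ c, f c) ↔
      ∀ c, P c (S ∩ c.supp) := by
  constructor
  · rintro ⟨f, hf, rfl⟩ c
    convert hf c using 1
    ext v
    simp only [Set.mem_inter_iff, Set.mem_iUnion]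
    refine ⟨fun ⟨⟨d, hvd⟩, hvc⟩ => ?_, fun hv => ⟨⟨c, hv⟩, hP _ _ (hf c) hv⟩⟩
    rwa [← ConnectedComponent.eq_of_common_vertex (hP _ _ (hf d) hvd) hvc]
  · intro h
    refine ⟨fun c => S ∩ c.supp, h, ?_⟩
    ext v
    simp

lemma inter_supp_mem_relCutSets_iff (S : Set V) (c : G.ConnectedComponent) :
    S ∩ c.supp ∈ relCutSets G c.supp ↔ (Sᶜ ∩ c.supp).Nonempty ∧ ∀ x ∈ S ∩ c.supp,
      numComp (G.induce (Sᶜ ∩ c.supp ∪ {x})) < numComp (G.induce (Sᶜ ∩ c.supp)) := by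
  have hdiff : c.supp \ (S ∩ c.supp) = Sᶜ ∩ c.supp := by
    ext v
    simp only [Set.mem_sdiff, Set.mem_inter_iff, Set.mem_compl_iff]
    tauto
  simp only [relCutSets, Set.mem_ofPred_eq, Set.inter_subset_right, true_and]
  have hne : S ∩ c.supp ≠ c.supp ↔ (Sᶜ ∩ c.supp).Nonempty := by
    rw [← hdiff, Set.sdiff_nonempty, Ne, Set.inter_eq_right, Set.subset_inter_iff]
    simp
  rw [hdiff, hne]
  refine ⟨?_, Or.inr⟩
  rintro (h | h)
  · refine ⟨?_, by simp [h]⟩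
    rw [← hdiff, h, Set.sdiff_empty]
    exact c.nonempty_supp
  · exact h

theorem exists_relCutSets_iUnion_iff [Finite V] (hG : ¬ G.Preconnected) (S : Set V) :
    (∃ f : G.ConnectedComponent → Set V, (∀ c, f c ∈ relCutSets G c.supp) ∧ S = ⋃ c, f c) ↔
      1 < numComp (G.induce Sᶜ) ∧
        ∀ x ∈ S, numComp (G.induce (Sᶜ ∪ {x})) < numComp (G.induce Sᶜ) := by
  rw [exists_iUnion_eq_iff_forall_inter_supp (fun _ _ h => h.1)]
  simp_rw [inter_supp_mem_relCutSets_iff, forall_and]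
  have hloc : (∀ (c : G.ConnectedComponent), ∀ x ∈ S ∩ c.supp,
      numComp (G.induce (Sᶜ ∩ c.supp ∪ {x})) < numComp (G.induce (Sᶜ ∩ c.supp))) ↔
      ∀ x ∈ S, numComp (G.induce (Sᶜ ∪ {x})) < numComp (G.induce Sᶜ) := by
    simp_rw [numComp_induce_union_singleton_lt_iff Sᶜ]
    exact ⟨fun h x hx => h _ x ⟨hx, rfl⟩, fun h c x hx => hx.2 ▸ h x hx.1⟩
  rw [hloc]
  refine and_congr_left fun hcut => ⟨fun hne => (one_lt_numComp_of_not_preconnected hG).trans_le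
    (numComp_le_numComp_induce hne), fun _ c => ?_⟩
  by_contra hempty
  obtain ⟨x, hx⟩ := c.nonempty_supp
  have hxS : x ∈ S := by_contra fun hxS => hempty ⟨x, hxS, hx⟩
  have := (numComp_induce_union_singleton_lt_iff Sᶜ x).1 (hcut x hxS)
  rw [hx, Set.not_nonempty_iff_eq_empty.1 hempty, numComp_induce_empty] at this
  exact Nat.not_lt_zero _ this

lemma numComp_induce_image (φ : G ≃g H) (s : Set V) :
    numComp (H.induce (φ '' s)) = numComp (G.induce s) :=
  (numComp_congr (φ.induce φ.injective.injOn.bijOn_image)).symm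

lemma image_mem_cutSets_iff (φ : G ≃g H) {T : Set V} : φ '' T ∈ cutSets H ↔ T ∈ cutSets G := by
  have huniv : φ '' T ⊂ Set.univ ↔ T ⊂ Set.univ := by
    rw [Set.ssubset_univ_iff, Set.ssubset_univ_iff, Ne, Ne,
      ← Set.image_univ_of_surjective φ.surjective, (Set.image_injective.2 φ.injective).eq_iff]
  simp only [cutSets, Set.mem_union, Set.mem_singleton_iff, Set.mem_ofPred_eq, Set.image_eq_empty,
    huniv, Set.forall_mem_image]
  refine or_congr_right (and_congr_right fun _ => forall₂_congr fun x _ => ?_)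
  rw [← Set.image_compl_eq φ.bijective, ← Set.image_singleton, ← Set.image_union,
    numComp_induce_image, numComp_induce_image]

end numComp

section join

variable {V1 V2 : Type} {G1 : SimpleGraph V1} {G2 : SimpleGraph V2}

variable (G1 G2) in
def joinGSwap : joinG G1 G2 ≃g joinG G2 G1 where
  toEquiv := Equiv.sumComm V1 V2
  map_rel_iff' := by rintro (a | a) (b | b) <;> exact Iff.rfl

variable (G2) in
noncomputable def joinGInduceInlIso (s : Set V1) :
    G1.induce s ≃g (joinG G1 G2).induce (Sum.inl '' s) where
  toEquiv := Equiv.Set.image Sum.inl s Sum.inl_injective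
  map_rel_iff' := Iff.rfl

lemma numComp_joinG_induce_inl_image (s : Set V1) :
    numComp ((joinG G1 G2).induce (Sum.inl '' s)) = numComp (G1.induce s) :=
  (numComp_congr (joinGInduceInlIso G2 s)).symm

lemma connected_joinG_induce {W : Set (V1 ⊕ V2)} {a : V1} {b : V2} (ha : Sum.inl a ∈ W)
    (hb : Sum.inr b ∈ W) : ((joinG G1 G2).induce W).Connected := by
  have hadj (u v : W) (h : (joinG G1 G2).Adj u v) : ((joinG G1 G2).induce W).Adj u v := h
  refine (connected_iff_exists_forall_reachable _).2 ⟨⟨_, hb⟩, ?_⟩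
  rintro ⟨u | u, hu⟩
  · exact (hadj ⟨_, hb⟩ ⟨_, hu⟩ trivial).reachable
  · exact (hadj ⟨_, hb⟩ ⟨_, ha⟩ trivial).reachable.trans (hadj ⟨_, ha⟩ ⟨_, hu⟩ trivial).reachable

/-- Once `T` misses a vertex on each side, `G[Tᶜ]` and `G[Tᶜ ∪ {i}]` are both connected. -/
lemma eq_empty_or_range_subset_of_mem_cutSets {T : Set (V1 ⊕ V2)}
    (hT : T ∈ cutSets (joinG G1 G2)) :
    T = ∅ ∨ Set.range Sum.inr ⊆ T ∨ Set.range Sum.inl ⊆ T := by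
  rcases hT with hT | ⟨-, hcut⟩
  · exact Or.inl hT
  rcases T.eq_empty_or_nonempty with hT | ⟨i, hi⟩
  · exact Or.inl hT
  refine Or.inr ?_
  rw [Set.range_subset_iff, Set.range_subset_iff]
  by_contra! h
  obtain ⟨⟨y, hy⟩, ⟨x, hx⟩⟩ := h
  have hlt := hcut i hi
  rwa [numComp_eq_one_of_connected (connected_joinG_induce (Or.inl hx) (Or.inl hy)),
    numComp_eq_one_of_connected (connected_joinG_induce hx hy), lt_self_iff_false] at hlt

lemma inl_image_union_range_inr_mem_cutSets_iff_numComp [Nonempty V2] (S : Set V1) :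
    Sum.inl '' S ∪ Set.range Sum.inr ∈ cutSets (joinG G1 G2) ↔
      1 < numComp (G1.induce Sᶜ) ∧
        ∀ x ∈ S, numComp (G1.induce (Sᶜ ∪ {x})) < numComp (G1.induce Sᶜ) := by
  obtain ⟨y⟩ := ‹Nonempty V2›
  have hcompl : (Sum.inl '' S ∪ Set.range Sum.inr : Set (V1 ⊕ V2))ᶜ = Sum.inl '' Sᶜ := by
    ext (x | x) <;> simp
  have hinl (x : V1) : (Sum.inl '' Sᶜ ∪ {Sum.inl x} : Set (V1 ⊕ V2)) = Sum.inl '' (Sᶜ ∪ {x}) := by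
    rw [Set.image_union, Set.image_singleton]
  have hinr {a : V1} (ha : a ∈ Sᶜ) (b : V2) :
      numComp ((joinG G1 G2).induce (Sum.inl '' Sᶜ ∪ {Sum.inr b})) = 1 :=
    numComp_eq_one_of_connected (connected_joinG_induce (Or.inl ⟨a, ha, rfl⟩) (Or.inr rfl))
  have huniv : (Sum.inl '' S ∪ Set.range Sum.inr : Set (V1 ⊕ V2)) ⊂ Set.univ ↔ Sᶜ.Nonempty := by
    rw [Set.ssubset_univ_iff, ← Set.nonempty_compl, hcompl, Set.image_nonempty]
  constructor
  · rintro (hT | ⟨hT, hcut⟩)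
    · simpa using congrArg (Sum.inr y ∈ ·) hT
    obtain ⟨a, ha⟩ := huniv.1 hT
    refine ⟨?_, fun x hx => ?_⟩
    · have hlt := hcut _ (Or.inr ⟨y, rfl⟩)
      rwa [hcompl, hinr ha, numComp_joinG_induce_inl_image] at hlt
    · have hlt := hcut _ (Or.inl ⟨x, hx, rfl⟩)
      rwa [hcompl, hinl, numComp_joinG_induce_inl_image, numComp_joinG_induce_inl_image] at hlt
  · rintro ⟨hlt, hcut⟩
    obtain ⟨a, ha⟩ : Sᶜ.Nonempty := Set.nonempty_iff_ne_empty.2 fun h => by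
      rw [h, numComp_induce_empty] at hlt
      omega
    refine Or.inr ⟨huniv.2 ⟨a, ha⟩, ?_⟩
    rintro _ (⟨x, hx, rfl⟩ | ⟨b, rfl⟩)
    · rw [hcompl, hinl, numComp_joinG_induce_inl_image, numComp_joinG_induce_inl_image]
      exact hcut x hx
    · rw [hcompl, hinr ha, numComp_joinG_induce_inl_image]
      exact hlt

theorem inl_image_union_range_inr_mem_cutSets_iff [Finite V1] [Nonempty V2]
    (h1 : ¬ G1.Preconnected) (S : Set V1) :
    Sum.inl '' S ∪ Set.range Sum.inr ∈ cutSets (joinG G1 G2) ↔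
      ∃ f : G1.ConnectedComponent → Set V1, (∀ c, f c ∈ relCutSets G1 c.supp) ∧ S = ⋃ c, f c := by
  rw [inl_image_union_range_inr_mem_cutSets_iff_numComp, exists_relCutSets_iUnion_iff h1]

theorem inr_image_union_range_inl_mem_cutSets_iff [Nonempty V1] [Finite V2]
    (h2 : ¬ G2.Preconnected) (S : Set V2) :
    Sum.inr '' S ∪ Set.range Sum.inl ∈ cutSets (joinG G1 G2) ↔
      ∃ f : G2.ConnectedComponent → Set V2, (∀ c, f c ∈ relCutSets G2 c.supp) ∧ S = ⋃ c, f c := by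
  have hswap : (Sum.inr '' S ∪ Set.range Sum.inl : Set (V1 ⊕ V2)) =
      joinGSwap G2 G1 '' (Sum.inl '' S ∪ Set.range Sum.inr) := by
    ext (x | x) <;> simp [joinGSwap]
  rw [hswap, image_mem_cutSets_iff, inl_image_union_range_inr_mem_cutSets_iff h2]

end join

lemma exists_eq_inl_image_union_range_inr {α β : Type*} {T : Set (α ⊕ β)}
    (h : Set.range Sum.inr ⊆ T) : ∃ S, T = Sum.inl '' S ∪ Set.range Sum.inr := by
  refine ⟨Sum.inl ⁻¹' T, ?_⟩
  conv_lhs => rw [← Set.image_preimage_inl_union_image_preimage_inr T]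
  rw [Set.preimage_eq_univ_iff.2 h, Set.image_univ]

lemma exists_eq_inr_image_union_range_inl {α β : Type*} {T : Set (α ⊕ β)}
    (h : Set.range Sum.inl ⊆ T) : ∃ S, T = Sum.inr '' S ∪ Set.range Sum.inl := by
  refine ⟨Sum.inr ⁻¹' T, ?_⟩
  conv_lhs => rw [← Set.image_preimage_inl_union_image_preimage_inr T]
  rw [Set.preimage_eq_univ_iff.2 h, Set.image_univ, Set.union_comm]

theorem stmt19 {V1 V2 : Type} [Fintype V1] [Fintype V2]
    (G1 : SimpleGraph V1) (G2 : SimpleGraph V2)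
    [Nonempty V1] [Nonempty V2]
    (h1 : ¬ G1.Preconnected) (h2 : ¬ G2.Preconnected) :
    cutSets (joinG G1 G2) =
      {(∅ : Set (V1 ⊕ V2))} ∪
      {U : Set (V1 ⊕ V2) | ∃ f : G1.ConnectedComponent → Set V1,
        (∀ c, f c ∈ relCutSets G1 c.supp) ∧
        U = Sum.inl '' (⋃ c, f c) ∪ Set.range Sum.inr} ∪
      {U : Set (V1 ⊕ V2) | ∃ f : G2.ConnectedComponent → Set V2,
        (∀ c, f c ∈ relCutSets G2 c.supp) ∧
        U = Sum.inr '' (⋃ c, f c) ∪ Set.range Sum.inl} := by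
  ext T
  constructor
  · intro hT
    rcases eq_empty_or_range_subset_of_mem_cutSets hT with rfl | hinr | hinl
    · exact Or.inl (Or.inl rfl)
    · obtain ⟨S, rfl⟩ := exists_eq_inl_image_union_range_inr hinr
      obtain ⟨f, hf, rfl⟩ := (inl_image_union_range_inr_mem_cutSets_iff h1 S).1 hT
      exact Or.inl (Or.inr ⟨f, hf, rfl⟩)
    · obtain ⟨S, rfl⟩ := exists_eq_inr_image_union_range_inl hinl
      obtain ⟨f, hf, rfl⟩ := (inr_image_union_range_inl_mem_cutSets_iff h2 S).1 hT
      exact Or.inr ⟨f, hf, rfl⟩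
  · rintro ((rfl | ⟨f, hf, rfl⟩) | ⟨f, hf, rfl⟩)
    · exact Or.inl rfl
    · exact (inl_image_union_range_inr_mem_cutSets_iff h1 _).2 ⟨f, hf, rfl⟩
    · exact (inr_image_union_range_inl_mem_cutSets_iff h2 _).2 ⟨f, hf, rfl⟩
end
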